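/- arXiv:1410.7213 — 5 statements merged into one kernel-verified Lean document; each statement's English description precedes it below -/
import Mathlib

section
/- Let p ≥ n ≥ 5 and write p ≡ r (mod n−1) with r ∈ {0,1,…,n−2}. Then ex(p;T_n) = ⌊((n−2)(p−1)−r−1)/2⌋ if n ≥ 7 and 2 ≤ r ≤ n−4, and ex(p;T_n) = ((n−2)p − r(n−1−r))/2 otherwise. -/
open SimpleGraph

/-- `G` contains a copy of `H` as a subgraph: there is an injective map
preserving adjacency. -/
def ContainsCopy {V : Type*} {W : Type*} (G : SimpleGraph V) (H : SimpleGraph W) : Prop :=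
  ∃ f : W ↪ V, ∀ a b, H.Adj a b → G.Adj (f a) (f b)

/-- `exNum p H` is the maximal number of edges in a simple graph of order `p`
not containing a copy of `H`. -/
noncomputable def exNum (p : ℕ) {W : Type*} (H : SimpleGraph W) : ℕ :=
  sSup {m : ℕ | ∃ G : SimpleGraph (Fin p), ¬ ContainsCopy G H ∧ Nat.card G.edgeSet = m}

/-- `exNum2 p H₁ H₂` is the maximal number of edges in a simple graph of order `p`
containing no copy of `H₁` and no copy of `H₂`. -/
noncomputable def exNum2 (p : ℕ) {W₁ W₂ : Type*} (H₁ : SimpleGraph W₁) (H₂ : SimpleGraph W₂) : ℕ :=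
  sSup {m : ℕ | ∃ G : SimpleGraph (Fin p),
    ¬ ContainsCopy G H₁ ∧ ¬ ContainsCopy G H₂ ∧ Nat.card G.edgeSet = m}

/-- The tree `T_n` on vertices `v_0, …, v_{n-1}` with edges
`v_0v_1, …, v_0v_{n-2}` and `v_{n-2}v_{n-1}`: the unique tree on `n` vertices
of maximal degree `n-2`. -/
def Tn (n : ℕ) : SimpleGraph (Fin n) :=
  SimpleGraph.fromRel (fun a b =>
    (a.val = 0 ∧ 1 ≤ b.val ∧ b.val ≤ n - 2) ∨ (a.val = n - 2 ∧ b.val = n - 1))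

/-- The tree `T_n^*` on vertices `v_0, …, v_{n-1}` with edges
`v_0v_1, …, v_0v_{n-3}`, `v_{n-3}v_{n-2}` and `v_{n-2}v_{n-1}`. -/
def TnStar (n : ℕ) : SimpleGraph (Fin n) :=
  SimpleGraph.fromRel (fun a b =>
    (a.val = 0 ∧ 1 ≤ b.val ∧ b.val ≤ n - 3) ∨ (a.val = n - 3 ∧ b.val = n - 2) ∨
    (a.val = n - 2 ∧ b.val = n - 1))

/-!
Let `G` be `T_n`-free and `p = k (n - 1) + r`. A component of order `s ≤ n - 1` has at most
`s (s - 1) / 2` edges. In a component of order `s ≥ n`, a vertex `v` of degree `≥ n - 2` forces the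
component to be the star at `v`: an edge from a neighbour `a` of `v` to a vertex outside `N[v]`,
or (when `deg v ≥ n - 1`) any path `v a b` with `b ≠ v`, extends `n - 3` further neighbours of `v`
to a copy of `T_n`. Hence `2 e(C) ≤ (n - 2) s - d(s)` with `d(s) = s (n - 1 - s)` for `s ≤ n - 1`
and `d(s) = s` otherwise, and minimising `∑ d(sᵢ)` over component orders with `∑ sᵢ = p` gives the
upper bound. It is attained by `k` copies of `K_{n-1}` next to `K_r`, or, when `7 ≤ n` and
`2 ≤ r ≤ n - 4`, by `k - 1` copies of `K_{n-1}` next to a graph of maximum degree `n - 3` with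
`⌊(n - 3)(n - 1 + r) / 2⌋` edges on the remaining `n - 1 + r` vertices (a circulant graph, plus a
matching when `n - 3` is odd).
-/

open Finset

section Bridge

variable {V W : Type*}

lemma containsCopy_iff_isContained (G : SimpleGraph V) (H : SimpleGraph W) :
    ContainsCopy G H ↔ H ⊑ G :=
  ⟨fun ⟨f, hf⟩ => ⟨⟨⟨f, hf _ _⟩, f.injective⟩⟩,
    fun ⟨f⟩ => ⟨f.toEmbedding, fun _ _ => f.toHom.map_adj⟩⟩

lemma exNum_eq_extremalNumber (p : ℕ) (H : SimpleGraph W) : exNum p H = extremalNumber p H := by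
  classical
  have hle : ∀ G : SimpleGraph (Fin p), H.Free G → Nat.card G.edgeSet ≤ extremalNumber p H := by
    intro G hG
    rw [Nat.card_eq_fintype_card, ← edgeFinset_card]
    simpa using card_edgeFinset_le_extremalNumber hG
  apply le_antisymm
  · refine csSup_le' ?_
    rintro _ ⟨G, hG, rfl⟩
    exact hle G ((containsCopy_iff_isContained G H).not.1 hG)
  · have h := extremalNumber_le_iff (V := Fin p) H
    rw [Fintype.card_fin] at h
    refine (h _).2 fun G _ hG => ?_
    refine le_csSup ⟨extremalNumber p H, ?_⟩ ⟨G, (containsCopy_iff_isContained G H).not.2 hG, ?_⟩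
    · rintro _ ⟨G', hG', rfl⟩
      exact hle G' ((containsCopy_iff_isContained G' H).not.1 hG')
    · rw [Nat.card_eq_fintype_card, ← edgeFinset_card]

end Bridge

section Deficiency

def componentDeficiency (n s : ℕ) : ℕ := if s ≤ n - 1 then s * (n - 1 - s) else s

/-- The least value of `∑ componentDeficiency n sᵢ` over positive `sᵢ` with `∑ sᵢ ≡ r`
(mod `n - 1`). -/
def minDeficiency (n r : ℕ) : ℕ :=
  if 7 ≤ n ∧ 2 ≤ r ∧ r ≤ n - 4 then n - 1 + r else r * (n - 1 - r)

variable {n r s : ℕ}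

lemma sub_two_le_componentDeficiency (hs : 1 ≤ s) (hsn : s ≠ n - 1) :
    n - 2 ≤ componentDeficiency n s := by
  unfold componentDeficiency
  split_ifs with h
  · obtain ⟨b, hb⟩ : ∃ b, n - 1 - s = b + 1 := ⟨n - 2 - s, by omega⟩
    have : n - 2 = s + b := by omega
    rw [hb, this]
    nlinarith
  · omega

lemma mul_sub_le_of_not_special (hr : r ≤ n - 2) (h : ¬(7 ≤ n ∧ 2 ≤ r ∧ r ≤ n - 4)) :
    r * (n - 1 - r) ≤ n - 2 + r := by
  rcases le_or_gt r 1 with hr1 | hr1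
  · interval_cases r <;> omega
  rcases le_or_gt (n - 3) r with hr3 | hr3
  · have : r * (n - 1 - r) ≤ r * 2 := Nat.mul_le_mul_left r (by omega)
    omega
  · obtain ⟨rfl, rfl⟩ : n = 6 ∧ r = 2 := by omega
    norm_num

lemma minDeficiency_le_mul :
    minDeficiency n r ≤ r * (n - 1 - r) := by
  unfold minDeficiency
  split_ifs with h
  · have h2 : 2 ≤ r := h.2.1
    have hb : 3 ≤ n - 1 - r := by omega
    have h6 : 6 ≤ r + (n - 1 - r) := by omega
    rw [show n - 1 + r = (n - 1 - r) + 2 * r by omega]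
    generalize n - 1 - r = b at *
    nlinarith
  · exact le_rfl

lemma minDeficiency_le_add (hr : r ≤ n - 2) : minDeficiency n r ≤ n - 1 + r := by
  unfold minDeficiency
  split_ifs with h
  · exact le_rfl
  · have := mul_sub_le_of_not_special hr h
    omega

lemma minDeficiency_le_two_mul (hr : r ≤ n - 2) : minDeficiency n r ≤ 2 * (n - 2) := by
  unfold minDeficiency
  split_ifs with h
  · omega
  · have := mul_sub_le_of_not_special hr h
    omega

/-- Parts of size `n - 1` change neither the residue nor the deficiency, one other part alone
must have size `≡ r`, and two other parts already cost `2 (n - 2)`. -/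
lemma minDeficiency_le_sum {ι : Type*} (hn : 5 ≤ n) (s : Finset ι) (f : ι → ℕ)
    (hf : ∀ i ∈ s, 1 ≤ f i) :
    minDeficiency n ((∑ i ∈ s, f i) % (n - 1)) ≤ ∑ i ∈ s, componentDeficiency n (f i) := by
  classical
  set B := s.filter (fun i => f i ≠ n - 1)
  have hmod : (∑ i ∈ B, f i) % (n - 1) = (∑ i ∈ s, f i) % (n - 1) := by
    have hrest : ∑ i ∈ s.filter (fun i => ¬f i ≠ n - 1), f i
        = #(s.filter (fun i => ¬f i ≠ n - 1)) * (n - 1) := by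
      rw [sum_congr rfl fun i hi => not_not.1 (mem_filter.1 hi).2, sum_const, smul_eq_mul]
    rw [← sum_filter_add_sum_filter_not s (fun i => f i ≠ n - 1), hrest,
      Nat.add_mul_mod_self_right]
  have hB : ∀ i ∈ B, n - 2 ≤ componentDeficiency n (f i) := fun i hi =>
    sub_two_le_componentDeficiency (hf i (mem_filter.1 hi).1) (mem_filter.1 hi).2
  rw [← hmod]
  refine le_trans (?_ : _ ≤ ∑ i ∈ B, componentDeficiency n (f i))
    (sum_le_sum_of_subset (filter_subset _ s))
  have hr : (∑ i ∈ B, f i) % (n - 1) ≤ n - 2 := by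
    have := Nat.mod_lt (∑ i ∈ B, f i) (show 0 < n - 1 by omega)
    omega
  rcases Nat.lt_or_ge #B 2 with hB2 | hB2
  · rcases Nat.lt_or_ge #B 1 with hB0 | hB1
    · simp [card_eq_zero.1 (by omega : #B = 0), minDeficiency]
    obtain ⟨i, hBi⟩ := card_eq_one.1 (by omega : #B = 1)
    have hiB : i ∈ B := hBi ▸ mem_singleton_self i
    simp only [hBi, sum_singleton] at hr ⊢
    have hfi := mem_filter.1 hiB
    unfold componentDeficiency
    split_ifs with hsmall
    · rw [Nat.mod_eq_of_lt (by omega : f i < n - 1)]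
      exact minDeficiency_le_mul
    · refine (minDeficiency_le_add hr).trans ?_
      have := Nat.div_add_mod (f i) (n - 1)
      have : 1 ≤ f i / (n - 1) := (Nat.one_le_div_iff (by omega)).2 (by omega)
      nlinarith
  · calc minDeficiency n ((∑ i ∈ B, f i) % (n - 1)) ≤ 2 * (n - 2) := minDeficiency_le_two_mul hr
      _ ≤ #B * (n - 2) := Nat.mul_le_mul_right _ hB2
      _ ≤ ∑ i ∈ B, componentDeficiency n (f i) := card_nsmul_le_sum B _ _ hB

lemma mul_pred_add_mul_sub (hr : r ≤ n - 2) : r * (r - 1) + r * (n - 1 - r) = (n - 2) * r := by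
  rcases Nat.eq_zero_or_pos r with rfl | hr0
  · simp
  · rw [← mul_add, mul_comm]
    congr 1
    omega

end Deficiency

namespace SimpleGraph

section Tn

variable {V : Type*} {n : ℕ}

lemma Tn_adj_of_val_eq_zero {a b : Fin n} (ha : a.val = 0) (hb : 1 ≤ b.val)
    (hb' : b.val ≤ n - 2) : (Tn n).Adj a b := by
  rw [Tn, fromRel_adj]
  refine ⟨fun h => ?_, Or.inl (Or.inl ⟨ha, hb, hb'⟩)⟩
  subst h
  omega

lemma Tn_adj_of_val_eq_sub_two (hn : 2 ≤ n) {a b : Fin n} (ha : a.val = n - 2)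
    (hb : b.val = n - 1) : (Tn n).Adj a b := by
  rw [Tn, fromRel_adj]
  refine ⟨fun h => ?_, Or.inl (Or.inr ⟨ha, hb⟩)⟩
  subst h
  omega

lemma connected_Tn (hn : 3 ≤ n) : (Tn n).Connected := by
  have : Nonempty (Fin n) := ⟨⟨0, by omega⟩⟩
  have hroot : ∀ i : Fin n, (Tn n).Reachable ⟨0, by omega⟩ i := by
    intro i
    rcases Nat.eq_zero_or_pos i.val with h | h
    · rw [show i = ⟨0, by omega⟩ from Fin.ext h]
    by_cases hi : i.val ≤ n - 2
    · exact (Tn_adj_of_val_eq_zero rfl h hi).reachable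
    · let c : Fin n := ⟨n - 2, by omega⟩
      have hc : (Tn n).Adj ⟨0, by omega⟩ c := Tn_adj_of_val_eq_zero rfl (by simp [c]; omega) le_rfl
      exact hc.reachable.trans (Tn_adj_of_val_eq_sub_two (by omega) rfl (by omega)).reachable
  exact ⟨fun i j => (hroot i).symm.trans (hroot j)⟩

open Classical in
lemma le_degree_Tn_zero (hn : 2 ≤ n) : n - 2 ≤ (Tn n).degree ⟨0, by omega⟩ := by
  simpa using card_le_card_of_injOn (s := (univ : Finset (Fin (n - 2))))
    (fun j => (⟨j.val + 1, by omega⟩ : Fin n))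
    (fun j _ => (mem_neighborFinset _ _ _).2
      (Tn_adj_of_val_eq_zero rfl (Nat.le_add_left _ _) (by have := j.isLt; dsimp only; omega)))
    (fun i _ j _ h => Fin.ext (by simpa using congrArg Fin.val h))

variable [Fintype V] [DecidableEq V] {G : SimpleGraph V} [DecidableRel G.Adj]

lemma Tn_isContained_of_adj_of_adj (hn : 3 ≤ n) {v u w : V} (hvu : G.Adj v u) (huw : G.Adj u w)
    (hwv : w ≠ v) (hcard : n - 3 ≤ #(((G.neighborFinset v).erase u).erase w)) : Tn n ⊑ G := by
  obtain ⟨m, rfl⟩ : ∃ m, n = m + 3 := ⟨n - 3, by omega⟩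
  set T := ((G.neighborFinset v).erase u).erase w
  obtain ⟨e⟩ : Nonempty (Fin m ↪ T) :=
    Function.Embedding.nonempty_of_card_le (by simpa using hcard)
  have he : ∀ j, G.Adj v (e j) ∧ (e j : V) ≠ u ∧ (e j : V) ≠ w := fun j => by
    have := (e j).2
    simp only [T, mem_erase, mem_neighborFinset] at this
    exact ⟨this.2.2, this.2.1, this.1⟩
  let f : Fin (m + 3) → V :=
    Fin.cons v (Fin.snoc (Fin.snoc (fun j => (e j : V)) u : Fin (m + 1) → V) w)
  have hf : Function.Injective f := by
    refine Fin.cons_injective_iff.2 ⟨?_, Fin.snoc_injective_iff.2 ⟨Fin.snoc_injective_iff.2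
      ⟨fun i j h => e.injective (Subtype.ext h), ?_⟩, ?_⟩⟩
    · rintro ⟨i, hi⟩
      induction i using Fin.lastCases with
      | last => exact hwv (by simpa using hi)
      | cast i =>
        induction i using Fin.lastCases with
        | last => exact hvu.ne (by simpa using hi.symm)
        | cast j => exact (he j).1.ne (by simpa using hi.symm)
    · rintro ⟨j, hj⟩; exact (he j).2.1 hj
    · rintro ⟨i, hi⟩
      induction i using Fin.lastCases with
      | last => exact huw.ne (by simpa using hi)
      | cast j => exact (he j).2.2 (by simpa using hi)
  have hcenter : ∀ b : Fin (m + 3), 1 ≤ b.val → b.val ≤ m + 1 → G.Adj v (f b) := by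
    intro b hb hb'
    induction b using Fin.cases with
    | zero => simp at hb
    | succ b =>
      induction b using Fin.lastCases with
      | last => simp at hb'
      | cast b =>
        induction b using Fin.lastCases with
        | last => simpa [f] using hvu
        | cast j => simpa [f] using (he j).1
  have hrel : ∀ a b : Fin (m + 3), (a.val = 0 ∧ 1 ≤ b.val ∧ b.val ≤ m + 3 - 2) ∨
      (a.val = m + 3 - 2 ∧ b.val = m + 3 - 1) → G.Adj (f a) (f b) := by
    rintro a b (⟨ha, hb, hb'⟩ | ⟨ha, hb⟩)
    · rw [show a = 0 from Fin.ext ha]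
      exact hcenter b hb (by omega)
    · rw [show a = (Fin.last m).castSucc.succ from Fin.ext (by simp [ha]),
        show b = (Fin.last (m + 1)).succ from Fin.ext (by simp [hb])]
      simpa [f] using huw
  refine ⟨⟨⟨f, fun {a b} hab => ?_⟩, hf⟩⟩
  rw [Tn, fromRel_adj] at hab
  exact hab.2.elim (hrel a b) fun h => (hrel b a h).symm

end Tn

section UpperBound

variable {V : Type*} {n : ℕ} {G : SimpleGraph V}

lemma mem_of_reachable_of_adj_closed {s : Finset V} (hs : ∀ a ∈ s, ∀ b, G.Adj a b → b ∈ s)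
    {u x : V} (hux : G.Reachable u x) (hu : u ∈ s) : x ∈ s := by
  obtain ⟨p⟩ := hux
  induction p with
  | nil => exact hu
  | cons hadj _ ih => exact ih (hs _ hu _ hadj)

variable [Fintype V] [DecidableEq V] [DecidableRel G.Adj]

lemma mem_insert_neighborFinset_of_adj_of_adj (hfree : (Tn n).Free G) (hn : 3 ≤ n) {v a b : V}
    (hv : n - 2 ≤ G.degree v) (hva : G.Adj v a) (hab : G.Adj a b) :
    b ∈ insert v (G.neighborFinset v) := by
  by_contra hb
  simp only [mem_insert, mem_neighborFinset, not_or] at hb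
  refine hfree (Tn_isContained_of_adj_of_adj hn hva hab hb.1 ?_)
  rw [erase_eq_of_notMem fun h => hb.2 ((mem_neighborFinset _ _ _).1 (mem_of_mem_erase h)),
    card_erase_of_mem ((mem_neighborFinset _ _ _).2 hva), card_neighborFinset_eq_degree]
  omega

lemma eq_of_adj_of_adj_of_sub_one_le_degree (hfree : (Tn n).Free G) (hn : 3 ≤ n) {v u w : V}
    (hv : n - 1 ≤ G.degree v) (hvu : G.Adj v u) (huw : G.Adj u w) : w = v := by
  by_contra hwv
  refine hfree (Tn_isContained_of_adj_of_adj hn hvu huw hwv ?_)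
  have h₁ := pred_card_le_card_erase (s := G.neighborFinset v) (a := u)
  have h₂ := pred_card_le_card_erase (s := (G.neighborFinset v).erase u) (a := w)
  rw [card_neighborFinset_eq_degree] at h₁
  omega

/-- A large component containing a vertex of degree `≥ n - 2` is a star. -/
lemma sum_degree_add_card_le_of_le_degree (hfree : (Tn n).Free G) (hn : 5 ≤ n) {S : Finset V}
    (hS : ∀ a ∈ S, ∀ b, G.Adj a b → b ∈ S) {v : V} (hvS : v ∈ S)
    (hreach : ∀ x ∈ S, G.Reachable v x) (hv : n - 2 ≤ G.degree v) (hSn : n ≤ #S) :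
    ∑ x ∈ S, G.degree x + #S ≤ (n - 2) * #S := by
  have hclosed : ∀ a ∈ insert v (G.neighborFinset v), ∀ b, G.Adj a b →
      b ∈ insert v (G.neighborFinset v) := by
    intro a ha b hab
    rcases mem_insert.1 ha with rfl | ha
    · exact mem_insert_of_mem ((mem_neighborFinset _ _ _).2 hab)
    · exact mem_insert_neighborFinset_of_adj_of_adj hfree (by omega) hv
        ((mem_neighborFinset _ _ _).1 ha) hab
  have hSeq : S = insert v (G.neighborFinset v) :=
    Subset.antisymm (fun x hx => mem_of_reachable_of_adj_closed hclosed (hreach x hx)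
      (mem_insert_self _ _))
      (insert_subset hvS fun b hb => hS v hvS b ((mem_neighborFinset _ _ _).1 hb))
  have hcard : #S = G.degree v + 1 := by
    rw [hSeq, card_insert_of_notMem (notMem_neighborFinset_self _ _),
      card_neighborFinset_eq_degree]
  have hleaf : ∀ u ∈ G.neighborFinset v, G.degree u ≤ 1 := by
    intro u hu
    rw [← card_neighborFinset_eq_degree, ← card_singleton v]
    refine card_le_card fun w hw => mem_singleton.2 ?_
    exact eq_of_adj_of_adj_of_sub_one_le_degree hfree (by omega) (by omega)
      ((mem_neighborFinset _ _ _).1 hu) ((mem_neighborFinset _ _ _).1 hw)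
  have hsum : ∑ x ∈ S, G.degree x ≤ 2 * G.degree v := by
    rw [hSeq, sum_insert (notMem_neighborFinset_self _ _)]
    have := sum_le_card_nsmul _ _ _ hleaf
    rw [card_neighborFinset_eq_degree, smul_eq_mul, mul_one] at this
    omega
  have : 3 * #S ≤ (n - 2) * #S := Nat.mul_le_mul_right _ (by omega)
  omega

lemma sum_degree_add_componentDeficiency_le (hfree : (Tn n).Free G) (hn : 5 ≤ n) {S : Finset V}
    (hS : ∀ a ∈ S, ∀ b, G.Adj a b → b ∈ S) (hreach : ∀ a ∈ S, ∀ b ∈ S, G.Reachable a b) :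
    ∑ x ∈ S, G.degree x + componentDeficiency n #S ≤ (n - 2) * #S := by
  unfold componentDeficiency
  split_ifs with hsmall
  · have hdeg : ∀ x ∈ S, G.degree x ≤ #S - 1 := fun x hx => by
      rw [← card_neighborFinset_eq_degree, ← card_erase_of_mem hx]
      exact card_le_card fun b hb => mem_erase.2
        ⟨(G.ne_of_adj ((mem_neighborFinset _ _ _).1 hb)).symm,
          hS x hx b ((mem_neighborFinset _ _ _).1 hb)⟩
    have := sum_le_card_nsmul _ _ _ hdeg
    rw [smul_eq_mul] at this
    rcases Nat.eq_zero_or_pos #S with h0 | h0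
    · simp [card_eq_zero.1 h0]
    · calc ∑ x ∈ S, G.degree x + #S * (n - 1 - #S)
          ≤ #S * (#S - 1) + #S * (n - 1 - #S) := by omega
        _ = #S * (n - 2) := by rw [← mul_add]; congr 1; omega
        _ = (n - 2) * #S := mul_comm _ _
  · by_cases hbig : ∃ v ∈ S, n - 2 ≤ G.degree v
    · obtain ⟨v, hvS, hv⟩ := hbig
      exact sum_degree_add_card_le_of_le_degree hfree hn hS hvS (hreach v hvS) hv (by omega)
    · push Not at hbig
      have := sum_le_card_nsmul S _ (n - 3) fun x hx => Nat.le_sub_one_of_lt (hbig x hx)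
      rw [smul_eq_mul] at this
      calc ∑ x ∈ S, G.degree x + #S ≤ #S * (n - 3) + #S := by omega
        _ = (n - 2) * #S := by rw [mul_comm, ← Nat.succ_mul]; congr 1; omega

theorem two_mul_card_edgeFinset_add_minDeficiency_le (hfree : (Tn n).Free G) (hn : 5 ≤ n) :
    2 * #G.edgeFinset + minDeficiency n (Fintype.card V % (n - 1)) ≤ (n - 2) * Fintype.card V := by
  classical
  let S : G.ConnectedComponent → Finset V := fun c => univ.filter (G.connectedComponentMk · = c)
  have hmem : ∀ c x, x ∈ S c ↔ G.connectedComponentMk x = c := by simp [S]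
  have hbound : ∀ c, ∑ x ∈ S c, G.degree x + componentDeficiency n #(S c) ≤ (n - 2) * #(S c) := by
    intro c
    refine sum_degree_add_componentDeficiency_le hfree hn (fun a ha b hab => ?_) fun a ha b hb => ?_
    · rw [hmem] at ha ⊢
      exact (ConnectedComponent.eq.2 hab.reachable.symm).trans ha
    · rw [hmem] at ha hb
      exact ConnectedComponent.eq.1 (ha.trans hb.symm)
  have hdeg : ∑ c, ∑ x ∈ S c, G.degree x = 2 * #G.edgeFinset := by
    rw [← sum_degrees_eq_twice_card_edges, ← sum_fiberwise univ G.connectedComponentMk]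
  have hcard : ∑ c, #(S c) = Fintype.card V := by
    have := sum_fiberwise univ G.connectedComponentMk fun _ => 1
    simpa only [sum_const, smul_eq_mul, mul_one, card_univ] using this
  have hdef : minDeficiency n (Fintype.card V % (n - 1)) ≤ ∑ c, componentDeficiency n #(S c) := by
    rw [← hcard]
    refine minDeficiency_le_sum hn _ _ fun c _ => ?_
    induction c using ConnectedComponent.ind with
    | h v => exact card_pos.2 ⟨v, (hmem _ v).2 rfl⟩
  have := sum_le_sum fun c (_ : c ∈ univ) => hbound c
  rw [sum_add_distrib, hdeg, ← mul_sum, hcard] at this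
  omega

end UpperBound

section Constructions

variable {V V₁ V₂ W ι : Type*} {n : ℕ}

lemma Reachable.apply_eq_of_adj {G : SimpleGraph V} (c : V → ι)
    (hc : ∀ a b, G.Adj a b → c a = c b) {u v : V} (h : G.Reachable u v) : c u = c v := by
  obtain ⟨p⟩ := h
  induction p with
  | nil => rfl
  | cons hadj _ ih => exact (hc _ _ hadj).trans ih

lemma isContained_of_copy_sum_of_forall_inl {H : SimpleGraph W} {G₁ : SimpleGraph V₁}
    {G₂ : SimpleGraph V₂} (f : Copy H (G₁ ⊕g G₂)) (hf : ∀ x, ∃ a, f x = Sum.inl a) : H ⊑ G₁ := by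
  choose g hg using hf
  refine ⟨⟨⟨g, fun {x y} hxy => ?_⟩, fun x y hxy => f.injective ?_⟩⟩
  · simpa [hg] using f.toHom.map_adj hxy
  · change f x = f y
    rw [hg, hg]
    exact congrArg Sum.inl hxy

lemma Free.sum {H : SimpleGraph W} {G₁ : SimpleGraph V₁} {G₂ : SimpleGraph V₂} (hH : H.Connected)
    (h₁ : H.Free G₁) (h₂ : H.Free G₂) : H.Free (G₁ ⊕g G₂) := by
  rintro ⟨f⟩
  obtain ⟨x₀⟩ := hH.nonempty
  have hside : ∀ x, (f x).isLeft = (f x₀).isLeft := fun x =>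
    ((hH.preconnected x x₀).map f.toHom).apply_eq_of_adj Sum.isLeft
      (by rintro (a | a) (b | b) hab <;> simp_all)
  cases hx₀ : (f x₀) with
  | inl _ =>
    refine h₁ (isContained_of_copy_sum_of_forall_inl f fun x => ?_)
    have := hside x
    rw [hx₀] at this
    cases hx : f x <;> simp_all
  | inr _ =>
    refine h₂ (isContained_of_copy_sum_of_forall_inl ((Iso.sumComm).toCopy.comp f) fun x => ?_)
    have := hside x
    rw [hx₀] at this
    cases hx : f x <;> simp_all [Copy.comp_apply]

lemma Free.boxProd_bot {H : SimpleGraph W} {G : SimpleGraph V} (hH : H.Connected) (h : H.Free G) :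
    H.Free ((⊥ : SimpleGraph ι) □ G) := by
  rintro ⟨f⟩
  obtain ⟨x₀⟩ := hH.nonempty
  have hfst : ∀ x, (f x).1 = (f x₀).1 := fun x =>
    ((hH.preconnected x x₀).map f.toHom).apply_eq_of_adj Prod.fst fun a b hab => by
      simp only [boxProd_adj, bot_adj, false_and, false_or] at hab
      exact hab.2
  refine h ⟨⟨⟨fun x => (f x).2, fun {x y} hxy => ?_⟩, fun x y hxy => f.injective ?_⟩⟩
  · have := f.toHom.map_adj hxy
    simp only [boxProd_adj, bot_adj, false_and, false_or] at this
    exact this.1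
  · exact Prod.ext ((hfst x).trans (hfst y).symm) hxy

lemma free_top_of_card_lt [Fintype V] [Fintype W] {H : SimpleGraph W}
    (h : Fintype.card V < Fintype.card W) : H.Free (⊤ : SimpleGraph V) :=
  fun ⟨f⟩ => (Fintype.card_le_of_injective f f.injective).not_gt h

lemma Tn_free_of_degree_lt [Fintype V] {G : SimpleGraph V} [DecidableRel G.Adj] (hn : 2 ≤ n)
    (h : ∀ v, G.degree v < n - 2) : (Tn n).Free G := by
  classical
  rintro ⟨f⟩
  exact (h _).not_ge ((le_degree_Tn_zero hn).trans (f.degree_le _))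

lemma card_edgeFinset_sum (G₁ : SimpleGraph V₁) (G₂ : SimpleGraph V₂) [Fintype G₁.edgeSet]
    [Fintype G₂.edgeSet] [Fintype (G₁ ⊕g G₂).edgeSet] :
    #(G₁ ⊕g G₂).edgeFinset = #G₁.edgeFinset + #G₂.edgeFinset := by
  simp only [edgeFinset_card, Fintype.card_congr edgeSetSumEquiv, Fintype.card_sum]

/-- `k` disjoint copies of `K_c`. -/
def cliques (k c : ℕ) : SimpleGraph (Fin k × Fin c) := (⊥ : SimpleGraph (Fin k)) □ ⊤

instance (k c : ℕ) : DecidableRel (cliques k c).Adj := fun _ _ => decidable_of_iff' _ boxProd_adj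

lemma two_mul_card_edgeFinset_cliques (k c : ℕ) :
    2 * #(cliques k c).edgeFinset = k * c * (c - 1) := by
  have hdeg : ∀ x, (cliques k c).degree x = c - 1 := fun x => by
    have := degree_boxProd (G := (⊥ : SimpleGraph (Fin k))) (H := ⊤) x
    rw [bot_degree, complete_graph_degree, Fintype.card_fin, zero_add] at this
    convert this
    rfl
  simp [← sum_degrees_eq_twice_card_edges, hdeg, mul_assoc]

lemma two_mul_card_edgeFinset_top (r : ℕ) :
    2 * #(⊤ : SimpleGraph (Fin r)).edgeFinset = r * (r - 1) := by
  rw [← sum_degrees_eq_twice_card_edges]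
  simp

lemma Tn_free_cliques (hn : 3 ≤ n) (k : ℕ) : (Tn n).Free (cliques k (n - 1)) :=
  Free.boxProd_bot (connected_Tn hn) (free_top_of_card_lt (by simp; omega))

end Constructions

section NearRegular

lemma degree_circulantGraph {A : Type*} [AddCommGroup A] [Fintype A] [DecidableEq A]
    (s : Finset A) (hs : ∀ x ∈ s, -x ∈ s) (h0 : (0 : A) ∉ s) (v : A) :
    (circulantGraph (s : Set A)).degree v = #s := by
  rw [← card_neighborFinset_eq_degree]
  have : (circulantGraph (s : Set A)).neighborFinset v = s.map (addLeftEmbedding v) := by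
    ext w
    simp only [mem_neighborFinset, circulantGraph_adj, mem_map, addLeftEmbedding_apply, mem_coe]
    constructor
    · rintro ⟨-, h | h⟩
      · exact ⟨w - v, by simpa using hs _ h, by abel⟩
      · exact ⟨w - v, h, by abel⟩
    · rintro ⟨j, hj, rfl⟩
      refine ⟨fun h => h0 ?_, Or.inr (by simpa using hj)⟩
      simpa [show j = 0 by simpa using h.symm] using hj
  rw [this, card_map]

variable {m t : ℕ}

/-- The jumps `±1, …, ±t` in `ZMod m`. -/
def shortJumps (m t : ℕ) : Finset (ZMod m) := (Icc 1 t ∪ Icc (m - t) (m - 1)).image Nat.cast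

lemma mem_shortJumps [NeZero m] (ht : 2 * t < m) {x : ZMod m} :
    x ∈ shortJumps m t ↔ 1 ≤ x.val ∧ x.val ≤ t ∨ m - t ≤ x.val := by
  have hx := x.val_lt
  simp only [shortJumps, mem_image, mem_union, mem_Icc]
  constructor
  · rintro ⟨i, hi, rfl⟩
    rw [ZMod.val_cast_of_lt (by omega)]
    omega
  · exact fun h => ⟨x.val, by omega, ZMod.natCast_zmod_val x⟩

lemma card_shortJumps (ht : 2 * t < m) : #(shortJumps m t) = 2 * t := by
  rw [shortJumps, card_image_of_injOn, card_union_of_disjoint, Nat.card_Icc, Nat.card_Icc]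
  · omega
  · exact Finset.disjoint_left.2 fun i hi hi' => by simp only [mem_Icc] at hi hi'; omega
  · intro i hi j hj hij
    simp only [coe_union, coe_Icc, Set.mem_union, Set.mem_Icc] at hi hj
    simpa [ZMod.val_cast_of_lt (show i < m by omega), ZMod.val_cast_of_lt (show j < m by omega)]
      using congrArg ZMod.val hij

lemma neg_mem_shortJumps [NeZero m] (ht : 2 * t < m) {x : ZMod m} (hx : x ∈ shortJumps m t) :
    -x ∈ shortJumps m t := by
  rw [mem_shortJumps ht] at hx ⊢
  have := x.val_lt
  rw [ZMod.neg_val, if_neg fun h => by simp [h] at hx; omega]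
  omega

lemma zero_notMem_shortJumps [NeZero m] (ht : 2 * t < m) : (0 : ZMod m) ∉ shortJumps m t := by
  rw [mem_shortJumps ht, ZMod.val_zero]
  omega

lemma degree_circulantGraph_shortJumps [NeZero m] (ht : 2 * t < m) (v : ZMod m) :
    (circulantGraph (shortJumps m t : Set (ZMod m))).degree v = 2 * t := by
  rw [degree_circulantGraph _ (fun _ => neg_mem_shortJumps ht) (zero_notMem_shortJumps ht),
    card_shortJumps ht]

/-- Added to the circulant graph of short jumps, it raises the degree of every vertex but at most
one by one. -/
def halfMatching (m : ℕ) : SimpleGraph (ZMod m) :=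
  fromRel fun a b => a.val < m / 2 ∧ b.val = a.val + m / 2

instance (m : ℕ) : DecidableRel (halfMatching m).Adj :=
  fun a b => decidable_of_iff' _ (fromRel_adj _ a b)

lemma degree_halfMatching_le [NeZero m] (v : ZMod m) : (halfMatching m).degree v ≤ 1 := by
  rw [← card_neighborFinset_eq_degree]
  refine card_le_one.2 fun a ha b hb => ZMod.val_injective m ?_
  rw [mem_neighborFinset, halfMatching, fromRel_adj] at ha hb
  omega

lemma le_card_edgeFinset_halfMatching [NeZero m] : m / 2 ≤ #(halfMatching m).edgeFinset := by
  have hval : ∀ i < m, ((i : ℕ) : ZMod m).val = i := fun i hi => ZMod.val_cast_of_lt hi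
  simpa using card_le_card_of_injOn (s := range (m / 2))
    (fun i => s(((i : ℕ) : ZMod m), ((i + m / 2 : ℕ) : ZMod m)))
    (fun i hi => by
      simp only [coe_range, Set.mem_Iio] at hi
      rw [mem_coe, mem_edgeFinset, mem_edgeSet, halfMatching, fromRel_adj]
      refine ⟨fun h => ?_, Or.inl ⟨?_, ?_⟩⟩
      · have := congrArg ZMod.val h
        rw [hval i (by omega), hval _ (by omega)] at this
        omega
      · rw [hval i (by omega)]; exact hi
      · rw [hval i (by omega), hval _ (by omega)])
    (fun i hi j hj h => by
      simp only [coe_range, Set.mem_Iio] at hi hj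
      rcases Sym2.eq_iff.1 h with ⟨h₁, -⟩ | ⟨h₁, -⟩ <;>
      · have := congrArg ZMod.val h₁
        rw [hval i (by omega), hval _ (by omega)] at this
        omega)

lemma disjoint_circulantGraph_halfMatching [NeZero m] (ht : t < m / 2) :
    Disjoint (circulantGraph (shortJumps m t : Set (ZMod m))) (halfMatching m) := by
  have ht' : 2 * t < m := by omega
  refine SimpleGraph.disjoint_left.2 fun a b hC hM => ?_
  rw [circulantGraph_adj, mem_coe, mem_coe, mem_shortJumps ht', mem_shortJumps ht'] at hC
  rw [halfMatching, fromRel_adj] at hM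
  have hsub : ∀ x y : ZMod m, x.val < m / 2 → y.val = x.val + m / 2 →
      (y - x).val = m / 2 ∧ (x - y).val = m - m / 2 := by
    intro x y hx hy
    have hyx : (y - x).val = m / 2 := by rw [ZMod.val_sub (by omega)]; omega
    refine ⟨hyx, ?_⟩
    rw [← neg_sub, ZMod.neg_val, if_neg fun h => by simp [h] at hyx; omega, hyx]
  rcases hM.2 with ⟨hx, hy⟩ | ⟨hx, hy⟩
  · have := hsub a b hx hy
    omega
  · have := hsub b a hx hy
    omega

theorem exists_degree_le_two_mul_card_edgeFinset [NeZero m] (d : ℕ) (h : d + 2 ≤ m) :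
    ∃ G : SimpleGraph (ZMod m), ∃ _ : DecidableRel G.Adj,
      (∀ v, G.degree v ≤ d) ∧ d * m ≤ 2 * #G.edgeFinset + 1 := by
  set C := circulantGraph (shortJumps m (d / 2) : Set (ZMod m))
  have hC : ∀ v, C.degree v = 2 * (d / 2) := degree_circulantGraph_shortJumps (by omega)
  have hCe : 2 * #C.edgeFinset = 2 * (d / 2) * m := by
    simp [← sum_degrees_eq_twice_card_edges, hC, ZMod.card, mul_comm]
  rcases Nat.even_or_odd d with hd | hd
  · have hd2 : 2 * (d / 2) = d := Nat.two_mul_div_two_of_even hd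
    refine ⟨C, inferInstance, fun v => by rw [hC, hd2], ?_⟩
    rw [hCe, hd2]
    omega
  · have hd2 : 2 * (d / 2) + 1 = d := Nat.two_mul_div_two_add_one_of_odd hd
    have hdisj := disjoint_circulantGraph_halfMatching (m := m) (t := d / 2) (by omega)
    have hdeg : ∀ v, (C ⊔ halfMatching m).degree v = C.degree v + (halfMatching m).degree v :=
      fun v => by
        rw [← card_neighborFinset_eq_degree, neighborFinset_sup_of_disjoint v hdisj,
          card_disjUnion, card_neighborFinset_eq_degree, card_neighborFinset_eq_degree]
    refine ⟨C ⊔ halfMatching m, inferInstance, fun v => ?_, ?_⟩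
    · rw [hdeg, hC]
      have := degree_halfMatching_le v
      omega
    · rw [← sum_degrees_eq_twice_card_edges, sum_congr rfl fun v _ => hdeg v, sum_add_distrib,
        sum_degrees_eq_twice_card_edges, sum_degrees_eq_twice_card_edges, hCe]
      have hdm : d * m = 2 * (d / 2) * m + m := by nth_rewrite 1 [← hd2]; ring
      have := le_card_edgeFinset_halfMatching (m := m)
      omega

end NearRegular

variable {n p : ℕ}

theorem exists_Tn_free_le_two_mul_card_edgeFinset (hn : 5 ≤ n) (hp : n - 1 ≤ p) :
    ∃ (V : Type) (_ : Fintype V) (G : SimpleGraph V) (_ : DecidableRel G.Adj),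
      Fintype.card V = p ∧ (Tn n).Free G ∧
        (n - 2) * p ≤ 2 * #G.edgeFinset + minDeficiency n (p % (n - 1)) + 1 := by
  classical
  set k := p / (n - 1)
  set r := p % (n - 1)
  have hpkr : p = k * (n - 1) + r := by rw [mul_comm]; exact (Nat.div_add_mod p (n - 1)).symm
  have hr : r < n - 1 := Nat.mod_lt _ (by omega)
  have hk : 1 ≤ k := (Nat.one_le_div_iff (by omega)).2 hp
  have hcl := two_mul_card_edgeFinset_cliques
  by_cases hspecial : 7 ≤ n ∧ 2 ≤ r ∧ r ≤ n - 4
  · have hp' : p = (k - 1) * (n - 1) + (n - 1 + r) := by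
      have := Nat.sub_one_mul k (n - 1)
      have := Nat.le_mul_of_pos_left (n - 1) (show 0 < k by omega)
      omega
    have : NeZero (n - 1 + r) := ⟨by omega⟩
    obtain ⟨B, _, hBdeg, hBe⟩ := exists_degree_le_two_mul_card_edgeFinset (m := n - 1 + r) (n - 3)
      (by omega)
    refine ⟨_, inferInstance, cliques (k - 1) (n - 1) ⊕g B, inferInstance, ?_,
      Free.sum (connected_Tn (by omega)) (Tn_free_cliques (by omega) _)
        (Tn_free_of_degree_lt (by omega) fun v => (hBdeg v).trans_lt (by omega)), ?_⟩
    · simp only [Fintype.card_sum, Fintype.card_prod, Fintype.card_fin, ZMod.card]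
      exact hp'.symm
    · have hsplit : (n - 2) * (n - 1 + r) = (n - 3) * (n - 1 + r) + (n - 1 + r) := by
        rw [← Nat.succ_mul]; congr 1; omega
      rw [card_edgeFinset_sum, minDeficiency, if_pos hspecial, mul_add, hcl, hp', mul_add, hsplit,
        show n - 1 - 1 = n - 2 by omega, mul_comm (n - 2)]
      omega
  · refine ⟨_, inferInstance, cliques k (n - 1) ⊕g (⊤ : SimpleGraph (Fin r)), inferInstance, ?_,
      Free.sum (connected_Tn (by omega)) (Tn_free_cliques (by omega) _)
        (free_top_of_card_lt (by simp; omega)), ?_⟩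
    · simp only [Fintype.card_sum, Fintype.card_prod, Fintype.card_fin]
      exact hpkr.symm
    · rw [card_edgeFinset_sum, minDeficiency, if_neg hspecial, mul_add, hcl,
        two_mul_card_edgeFinset_top, add_assoc (_ * _), mul_pred_add_mul_sub (by omega),
        show n - 1 - 1 = n - 2 by omega, hpkr, mul_add, mul_comm (n - 2)]
      omega

theorem extremalNumber_Tn (hn : 5 ≤ n) (hp : n - 1 ≤ p) :
    extremalNumber p (Tn n) = ((n - 2) * p - minDeficiency n (p % (n - 1))) / 2 := by
  obtain ⟨V, _, G, _, hcard, hfree, hG⟩ := exists_Tn_free_le_two_mul_card_edgeFinset hn hp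
  have hlow := card_edgeFinset_le_extremalNumber hfree
  rw [hcard] at hlow
  have hup := extremalNumber_le_iff (V := Fin p) (Tn n)
    (((n - 2) * p - minDeficiency n (p % (n - 1))) / 2)
  rw [Fintype.card_fin] at hup
  have := hup.2 fun G' _ hG' => by
    have := two_mul_card_edgeFinset_add_minDeficiency_le hG' hn
    rw [Fintype.card_fin] at this
    omega
  omega

end SimpleGraph

theorem stmt2_general (p n r : ℕ) (hn : 5 ≤ n) (hp : n ≤ p)
    (hmod : p % (n - 1) = r) :
    exNum p (Tn n) =
      if 7 ≤ n ∧ 2 ≤ r ∧ r ≤ n - 4 then ((n - 2) * (p - 1) - r - 1) / 2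
      else ((n - 2) * p - r * (n - 1 - r)) / 2 := by
  rw [exNum_eq_extremalNumber, extremalNumber_Tn hn (by omega), hmod, minDeficiency]
  split_ifs
  · have : (n - 2) * (p - 1) = (n - 2) * p - (n - 2) := Nat.mul_sub_one _ _
    have : n - 2 ≤ (n - 2) * p := Nat.le_mul_of_pos_right _ (by omega)
    omega
  · rfl

theorem stmt2 (p n r : ℕ) (hn : 5 ≤ n) (hp : n ≤ p) (hr : r ≤ n - 2)
    (hmod : p % (n - 1) = r) :
    exNum p (Tn n) =
      if 7 ≤ n ∧ 2 ≤ r ∧ r ≤ n - 4 then ((n - 2) * (p - 1) - r - 1) / 2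
      else ((n - 2) * p - r * (n - 1 - r)) / 2 :=
  stmt2_general p n r hn hp hmod
end

section
/- Let G be an extremal graph of order p not containing T_n (p ≥ n ≥ 5). Then the maximum degree of G is at most n−2, and every vertex of degree exactly n−2 lies in a component of G isomorphic to K_{n−1}. -/
open SimpleGraph

/-!
Two observations drive the proof. First, `T_n` sits around any vertex `v` that has `n - 3`
neighbours besides a neighbour `u` which itself has a neighbour `w ≠ v`. Second, replacing a set
`B` of `n - 1` vertices by a clique and deleting every edge between `B` and the rest keeps the
graph `T_n`-free: a copy of the connected graph `T_n` meeting `B` would lie inside `B`, which is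
too small. By extremality this surgery never gains edges.

If `deg v ≥ n - 1`, the first observation makes every neighbour of `v` a leaf, so for `B` a set of
`n - 1` of them the surgery trades `n - 1` edges for `(n - 1).choose 2 > n - 1`. If
`deg v = n - 2`, the first observation shows that the closed neighbourhood of `v` is closed under
adjacency, hence a component; the surgery on it then only adds edges, so extremality forces it to
be a clique.
-/

open Finset

theorem Nat.lt_choose_two {k : ℕ} (hk : 4 ≤ k) : k < k.choose 2 := by
  obtain ⟨j, rfl⟩ : ∃ j, k = j + 4 := ⟨k - 4, by omega⟩
  rw [Nat.choose_two_right, Nat.lt_iff_add_one_le, Nat.le_div_iff_mul_le two_pos,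
    show j + 4 - 1 = j + 3 by omega]
  nlinarith

namespace SimpleGraph

variable {V : Type*}

theorem Reachable.mem_of_forall_adj {G : SimpleGraph V} {S : Set V}
    (hS : ∀ x ∈ S, ∀ y, G.Adj x y → y ∈ S) {x y : V} (h : G.Reachable x y) (hx : x ∈ S) :
    y ∈ S := by
  obtain ⟨p⟩ := h
  induction p with
  | nil => exact hx
  | cons hadj _ ih => exact ih (hS _ hx _ hadj)

theorem supp_connectedComponentMk_eq_insert_neighborSet {G : SimpleGraph V} {v : V}
    (h : ∀ x ∈ insert v (G.neighborSet v), ∀ y, G.Adj x y → y ∈ insert v (G.neighborSet v)) :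
    (G.connectedComponentMk v).supp = insert v (G.neighborSet v) := by
  ext x
  rw [ConnectedComponent.mem_supp_iff, ConnectedComponent.eq]
  constructor
  · exact fun hxv => hxv.symm.mem_of_forall_adj h (Set.mem_insert v _)
  · rintro (rfl | hx)
    · rfl
    · exact (G.adj_symm hx).reachable

def replaceByClique (G : SimpleGraph V) (B : Set V) : SimpleGraph V where
  Adj x y := x ≠ y ∧ ((x ∈ B ∧ y ∈ B) ∨ (G.Adj x y ∧ x ∉ B ∧ y ∉ B))
  symm := ⟨fun _ _ ⟨hne, h⟩ => ⟨hne.symm, h.imp And.symm fun h => ⟨h.1.symm, h.2.2, h.2.1⟩⟩⟩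
  loopless := ⟨fun _ h => h.1 rfl⟩

@[simp]
theorem replaceByClique_adj {G : SimpleGraph V} {B : Set V} {x y : V} :
    (G.replaceByClique B).Adj x y ↔ x ≠ y ∧ ((x ∈ B ∧ y ∈ B) ∨ (G.Adj x y ∧ x ∉ B ∧ y ∉ B)) :=
  Iff.rfl

theorem le_replaceByClique {G : SimpleGraph V} {B : Set V}
    (hB : ∀ x ∈ B, ∀ y, G.Adj x y → y ∈ B) : G ≤ G.replaceByClique B := by
  intro x y hxy
  by_cases hx : x ∈ B
  · exact ⟨hxy.ne, Or.inl ⟨hx, hB x hx y hxy⟩⟩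
  · exact ⟨hxy.ne, Or.inr ⟨hxy, hx, fun hy => hx (hB y hy x hxy.symm)⟩⟩

theorem card_edgeFinset_replaceByClique_add [Fintype V] [DecidableEq V] (G : SimpleGraph V)
    [DecidableRel G.Adj] (B : Finset V) [DecidableRel (G.replaceByClique B).Adj] :
    #(G.replaceByClique B).edgeFinset + #{e ∈ G.edgeFinset | ∃ x ∈ e, x ∈ B} =
      (#B).choose 2 + #G.edgeFinset := by
  have hsplit : (G.replaceByClique B).edgeFinset =
      B.offDiag.image Sym2.mk.uncurry ∪ {e ∈ G.edgeFinset | ¬ ∃ x ∈ e, x ∈ B} := by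
    ext e
    induction e using Sym2.ind with
    | _ x y =>
      simp only [mem_edgeFinset, mem_edgeSet, replaceByClique_adj, mem_union, mem_image,
        mem_offDiag, Prod.exists, Function.uncurry_apply_pair, Sym2.eq_iff, mem_filter,
        Sym2.mem_iff, not_exists, not_and]
      aesop
  have hdisj : Disjoint (B.offDiag.image Sym2.mk.uncurry)
      {e ∈ G.edgeFinset | ¬ ∃ x ∈ e, x ∈ B} := by
    rw [Finset.disjoint_left]
    intro e he he'
    obtain ⟨⟨x, y⟩, hxy, rfl⟩ := mem_image.1 he
    exact (mem_filter.1 he').2 ⟨x, Sym2.mem_mk_left x y, (mem_offDiag.1 hxy).1⟩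
  rw [hsplit, card_union_of_disjoint hdisj, Sym2.card_image_offDiag,
    ← card_filter_add_card_filter_not (s := G.edgeFinset) (fun e => ∃ x ∈ e, x ∈ B)]
  ring

theorem containsCopy_of_containsCopy_replaceByClique {W : Type*} [Fintype W]
    {G : SimpleGraph V} {H : SimpleGraph W} (hH : H.Preconnected) {B : Finset V}
    (hB : #B < Fintype.card W) (h : ContainsCopy (G.replaceByClique B) H) :
    ContainsCopy G H := by
  obtain ⟨f, hf⟩ := h
  have hclosed : ∀ a ∈ {a | f a ∈ B}, ∀ b, H.Adj a b → b ∈ {a | f a ∈ B} := by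
    intro a ha b hab
    rcases (replaceByClique_adj.1 (hf a b hab)).2 with h | h
    · exact h.2
    · exact absurd ha h.2.1
  by_cases hmeet : ∃ a, f a ∈ B
  · obtain ⟨a, ha⟩ := hmeet
    have hmaps : ∀ b, f b ∈ B := fun b => (hH a b).mem_of_forall_adj hclosed ha
    have := Fintype.card_le_of_injective (fun b => (⟨f b, hmaps b⟩ : B))
      fun a b h => f.injective (congrArg Subtype.val h)
    simp only [Fintype.card_coe] at this
    omega
  · push Not at hmeet
    refine ⟨f, fun a b hab => ?_⟩
    rcases (replaceByClique_adj.1 (hf a b hab)).2 with h | h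
    · exact absurd h.1 (hmeet a)
    · exact h.1

end SimpleGraph

theorem card_edgeSet_le_exNum {p : ℕ} {W : Type*} {H : SimpleGraph W} {G : SimpleGraph (Fin p)}
    (h : ¬ ContainsCopy G H) : Nat.card G.edgeSet ≤ exNum p H :=
  le_csSup ⟨Nat.card (Sym2 (Fin p)), fun _ ⟨_, _, hG'⟩ =>
    hG' ▸ Nat.card_le_card_of_injective _ Subtype.coe_injective⟩ ⟨G, h, rfl⟩

theorem isExtremal_of_card_edgeSet_eq_exNum {p : ℕ} {W : Type*} {H : SimpleGraph W}
    {G : SimpleGraph (Fin p)} [DecidableRel G.Adj] (hfree : ¬ ContainsCopy G H)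
    (hext : Nat.card G.edgeSet = exNum p H) : G.IsExtremal (¬ ContainsCopy · H) := by
  refine ⟨hfree, fun _ _ hG' => ?_⟩
  have := card_edgeSet_le_exNum hG'
  rw [← hext, Nat.card_eq_fintype_card, Nat.card_eq_fintype_card] at this
  rwa [edgeFinset_card, edgeFinset_card]

theorem tn_adj_iff {n : ℕ} {a b : Fin n} :
    (Tn n).Adj a b ↔ a ≠ b ∧
      ((a.val = 0 ∧ 1 ≤ b.val ∧ b.val ≤ n - 2) ∨ (a.val = n - 2 ∧ b.val = n - 1) ∨
        (b.val = 0 ∧ 1 ≤ a.val ∧ a.val ≤ n - 2) ∨ (b.val = n - 2 ∧ a.val = n - 1)) := by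
  simp only [Tn, SimpleGraph.fromRel_adj]
  tauto

theorem tn_preconnected (n : ℕ) : (Tn n).Preconnected := by
  have hreach : ∀ i j : Fin n, i.val = 0 → (Tn n).Reachable i j := by
    have star : ∀ i j : Fin n, i.val = 0 → j.val ≤ n - 2 → (Tn n).Reachable i j := by
      intro i j hi hj
      by_cases hj0 : j.val = 0
      · rw [Fin.ext (hi.trans hj0.symm)]
      · have hne : i ≠ j := fun h => hj0 (by rw [← h]; exact hi)
        exact (tn_adj_iff.2 ⟨hne, Or.inl ⟨hi, by omega, hj⟩⟩).reachable
    intro i j hi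
    by_cases hj : j.val ≤ n - 2
    · exact star i j hi hj
    · have hj' : j.val = n - 1 := by omega
      let k : Fin n := ⟨n - 2, by omega⟩
      have hkj : (Tn n).Adj k j :=
        tn_adj_iff.2 ⟨fun h => by simp [k, Fin.ext_iff] at h; omega, Or.inr (Or.inl ⟨rfl, hj'⟩)⟩
      exact (star i k hi le_rfl).trans hkj.reachable
  intro a b
  have hn : 0 < n := a.pos
  exact (hreach ⟨0, hn⟩ a rfl).symm.trans (hreach ⟨0, hn⟩ b rfl)

theorem containsCopy_tn_of_adj {V : Type*} [DecidableEq V] {G : SimpleGraph V} {n : ℕ}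
    (hn : 3 ≤ n) {v u w : V} [Fintype (G.neighborSet v)] (hvu : G.Adj v u) (huw : G.Adj u w)
    (hwv : w ≠ v) (hdeg : n - 3 ≤ #(((G.neighborFinset v).erase u).erase w)) :
    ContainsCopy G (Tn n) := by
  obtain ⟨T, hTsub, hT⟩ := exists_subset_card_eq hdeg
  have hwT : w ∉ T := fun h => ne_of_mem_erase (hTsub h) rfl
  have huT : u ∉ T := fun h => ne_of_mem_erase (mem_of_mem_erase (hTsub h)) rfl
  have hvT : ∀ x ∈ T, G.Adj v x :=
    fun x hx => (G.mem_neighborFinset v x).1 (mem_of_mem_erase (mem_of_mem_erase (hTsub hx)))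
  obtain ⟨m, rfl⟩ : ∃ m, n = m + 3 := ⟨n - 3, by omega⟩
  let e := (T.equivFinOfCardEq hT).symm
  let g : Fin m → V := fun i => e i
  have hgT : ∀ i, g i ∈ T := fun i => (e i).2
  -- `f` sends `0 ↦ v`, `1, …, m` onto `T`, `m + 1 ↦ u` and `m + 2 ↦ w`.
  let leaves : Fin (m + 1) → V := Fin.snoc g u
  let f : Fin (m + 3) → V := Fin.cons v (Fin.snoc leaves w)
  have hleaves : ∀ i, G.Adj v (leaves i) := by
    intro i
    induction i using Fin.lastCases with
    | last => simpa [leaves] using hvu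
    | cast i => simpa [leaves] using hvT _ (hgT i)
  have hf : Function.Injective f := by
    simp only [f, leaves, Fin.cons_injective_iff, Fin.snoc_injective_iff, Fin.range_snoc]
    refine ⟨?_, ⟨Subtype.val_injective.comp e.injective, fun ⟨i, hi⟩ => huT (hi ▸ hgT i)⟩, ?_⟩
    · simp only [Set.mem_insert_iff, Set.mem_range, not_or]
      exact ⟨hwv.symm, hvu.ne, fun ⟨i, hi⟩ => G.irrefl (hi ▸ hvT _ (hgT i))⟩
    · simp only [Set.mem_insert_iff, Set.mem_range, not_or]
      exact ⟨huw.ne.symm, fun ⟨i, hi⟩ => hwT (hi ▸ hgT i)⟩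
  have hleaf : ∀ c : Fin (m + 1), f c.castSucc.succ = leaves c := by simp [f]
  have hlast : f (Fin.last (m + 2)) = w := by rw [← Fin.succ_last]; simp [f]
  have hpath : ∀ a b : Fin (m + 3), (a.val = 0 ∧ 1 ≤ b.val ∧ b.val ≤ m + 3 - 2) ∨
      (a.val = m + 3 - 2 ∧ b.val = m + 3 - 1) → G.Adj (f a) (f b) := by
    rintro a b (⟨ha, hb1, hb2⟩ | ⟨ha, hb⟩)
    · have hb : b = (⟨b.val - 1, by omega⟩ : Fin (m + 1)).castSucc.succ :=
        Fin.ext (by simp; omega)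
      rw [show a = 0 from Fin.ext ha, hb, hleaf]
      exact hleaves _
    · have ha' : a = (Fin.last m : Fin (m + 1)).castSucc.succ := Fin.ext (by simp; omega)
      rw [ha', hleaf, Fin.ext (show b.val = (Fin.last (m + 2)).val by simp; omega), hlast]
      simpa [leaves] using huw
  refine ⟨⟨f, hf⟩, fun a b hab => ?_⟩
  rw [Tn, SimpleGraph.fromRel_adj] at hab
  obtain ⟨-, h | h⟩ := hab
  · exact hpath a b h
  · exact (hpath b a h).symm

namespace SimpleGraph

section Extremal

variable {V W : Type*} [Fintype V] {G : SimpleGraph V} [DecidableRel G.Adj]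
  {H : SimpleGraph W} [Fintype W]

theorem IsExtremal.card_edgeFinset_replaceByClique_le (hG : G.IsExtremal (¬ ContainsCopy · H))
    (hH : H.Preconnected) {B : Finset V} (hB : #B < Fintype.card W)
    [DecidableRel (G.replaceByClique B).Adj] :
    #(G.replaceByClique B).edgeFinset ≤ #G.edgeFinset :=
  hG.2 fun h => hG.1 (containsCopy_of_containsCopy_replaceByClique hH hB h)

theorem IsExtremal.isClique_of_forall_adj (hG : G.IsExtremal (¬ ContainsCopy · H))
    (hH : H.Preconnected) {B : Finset V} (hB : #B < Fintype.card W)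
    (hclosed : ∀ x ∈ B, ∀ y, G.Adj x y → y ∈ B) : G.IsClique (B : Set V) := by
  have hfree : ¬ ContainsCopy (G.replaceByClique B) H :=
    fun h => hG.1 (containsCopy_of_containsCopy_replaceByClique hH hB h)
  have heq := (hG.le_iff_eq hfree).1 (le_replaceByClique hclosed)
  intro x hx y hy hxy
  rw [heq]
  exact ⟨hxy, Or.inl ⟨hx, hy⟩⟩

theorem IsExtremal.degree_le_of_tn [DecidableEq V] {n : ℕ}
    (hG : G.IsExtremal (¬ ContainsCopy · (Tn n))) (hn : 5 ≤ n) (v : V) : G.degree v ≤ n - 2 := by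
  by_contra! hdeg
  have hleaf : ∀ u ∈ G.neighborFinset v, ∀ w, G.Adj u w → w = v := by
    intro u hu w huw
    by_contra hwv
    refine hG.1 (containsCopy_tn_of_adj (by omega) ((G.mem_neighborFinset v u).1 hu) huw hwv ?_)
    have := pred_card_le_card_erase (s := G.neighborFinset v) (a := u)
    have := pred_card_le_card_erase (s := (G.neighborFinset v).erase u) (a := w)
    rw [card_neighborFinset_eq_degree] at *
    omega
  obtain ⟨B, hBN, hB⟩ := exists_subset_card_eq (s := G.neighborFinset v) (n := n - 1)
    (by rw [card_neighborFinset_eq_degree]; omega)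
  have hmeet : #{e ∈ G.edgeFinset | ∃ x ∈ e, x ∈ B} ≤ #B := by
    refine (card_le_card fun e he => ?_).trans (card_image_le (f := fun b => s(v, b)))
    obtain ⟨he, x, hxe, hxB⟩ := mem_filter.1 he
    obtain ⟨y, rfl⟩ := Sym2.mem_iff_exists.1 hxe
    rw [hleaf x (hBN hxB) y (mem_edgeFinset.1 he), Sym2.eq_swap]
    exact mem_image_of_mem _ hxB
  classical
  have hcount := card_edgeFinset_replaceByClique_add G B
  have hle := hG.card_edgeFinset_replaceByClique_le (tn_preconnected n) (B := B)
    (by rw [Fintype.card_fin]; omega)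
  have hchoose := Nat.lt_choose_two (k := #B) (by omega)
  omega

theorem IsExtremal.nonempty_induce_supp_iso_top_of_tn [DecidableEq V] {n : ℕ}
    (hG : G.IsExtremal (¬ ContainsCopy · (Tn n))) (hn : 3 ≤ n) {v : V} (hv : G.degree v = n - 2) :
    Nonempty (G.induce (G.connectedComponentMk v).supp ≃g (⊤ : SimpleGraph (Fin (n - 1)))) := by
  set S := insert v (G.neighborFinset v) with hSdef
  have hS : #S = n - 1 := by
    rw [card_insert_of_notMem (G.notMem_neighborFinset_self v), card_neighborFinset_eq_degree]
    omega
  have hclosed : ∀ x ∈ S, ∀ y, G.Adj x y → y ∈ S := by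
    intro x hx y hxy
    rcases mem_insert.1 hx with rfl | hvx
    · exact mem_insert_of_mem ((G.mem_neighborFinset x y).2 hxy)
    by_contra hy
    refine hG.1 (containsCopy_tn_of_adj hn ((G.mem_neighborFinset v x).1 hvx) hxy
      (fun h => hy (h ▸ mem_insert_self v _)) ?_)
    rw [erase_eq_of_notMem fun h => hy (mem_insert_of_mem (mem_of_mem_erase h)),
      card_erase_of_mem hvx, card_neighborFinset_eq_degree]
    omega
  have hSset : (S : Set V) = insert v (G.neighborSet v) := by
    rw [hSdef, coe_insert, coe_neighborFinset]
  rw [supp_connectedComponentMk_eq_insert_neighborSet (hSset ▸ hclosed), ← hSset,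
    induce_eq_top.2 (hG.isClique_of_forall_adj (tn_preconnected n)
      (by rw [Fintype.card_fin]; omega) hclosed)]
  exact ⟨Iso.completeGraph (S.equivFinOfCardEq hS)⟩

end Extremal

end SimpleGraph

theorem stmt3_general (p n : ℕ) (hn : 5 ≤ n) (G : SimpleGraph (Fin p))
    (hfree : ¬ ContainsCopy G (Tn n))
    (hext : Nat.card G.edgeSet = exNum p (Tn n)) :
    (∀ v, Nat.card (G.neighborSet v) ≤ n - 2) ∧
      ∀ v, Nat.card (G.neighborSet v) = n - 2 →
        Nonempty (G.induce (G.connectedComponentMk v).supp ≃g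
          (⊤ : SimpleGraph (Fin (n - 1)))) := by
  classical
  have hG := isExtremal_of_card_edgeSet_eq_exNum hfree hext
  have hdeg : ∀ v, Nat.card (G.neighborSet v) = G.degree v := fun v => by
    rw [Nat.card_eq_fintype_card, card_neighborSet_eq_degree]
  exact ⟨fun v => hdeg v ▸ hG.degree_le_of_tn hn v, fun v hv =>
    hG.nonempty_induce_supp_iso_top_of_tn (by omega) ((hdeg v).symm.trans hv)⟩

theorem stmt3 (p n : ℕ) (hn : 5 ≤ n) (hp : n ≤ p) (G : SimpleGraph (Fin p))
    (hfree : ¬ ContainsCopy G (Tn n))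
    (hext : Nat.card G.edgeSet = exNum p (Tn n)) :
    (∀ v, Nat.card (G.neighborSet v) ≤ n - 2) ∧
      ∀ v, Nat.card (G.neighborSet v) = n - 2 →
        Nonempty (G.induce (G.connectedComponentMk v).supp ≃g
          (⊤ : SimpleGraph (Fin (n - 1)))) :=
  stmt3_general p n hn G hfree hext
end

section
/- Let p ≥ n ≥ 6 and let G be a graph of order p with e(G) = ex(p;T_n*) containing no copy of T_n*. Then the maximum degree of G is at most n−2. -/
open SimpleGraph

/-!
If a vertex `v` had degree at least `n - 1`, no path `v a b c` on four vertices could start at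
`v`: together with `n - 4` further neighbours of `v` it would form a copy of `T_n*`. Then the
ball `W` of radius two around `v` is closed under adjacency and spans at most `3 (|W| - 1) / 2`
edges (its second-layer vertices are leaves, and each neighbour of `v` has at most one
neighbour inside `N(v)`). Replacing these edges by disjoint copies of `K₅` covering `W` (plus one
smaller clique) yields at least `(3 |W| - 2) / 2` edges, and the new graph is still
`T_n*`-free because `T_n*` is connected with `n ≥ 6` vertices. This contradicts extremality.
-/

open Finset

namespace SimpleGraph

variable {V α : Type*}

theorem Reachable.apply_eq_of_adj_s4 {G : SimpleGraph V} {κ : V → α}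
    (hκ : ∀ x y, G.Adj x y → κ x = κ y) {x y : V} (h : G.Reachable x y) : κ x = κ y := by
  obtain ⟨p⟩ := h
  induction p with
  | nil => rfl
  | cons h _ ih => exact (hκ _ _ h).trans ih

theorem natCard_edgeSet_eq_card_edgeFinset [Fintype V] (G : SimpleGraph V) [DecidableRel G.Adj] :
    Nat.card G.edgeSet = #G.edgeFinset := by
  rw [Nat.card_eq_fintype_card, card_edgeSet]

theorem natCard_edgeSet_sup [Finite V] {G₁ G₂ : SimpleGraph V} (h : Disjoint G₁ G₂) :
    Nat.card (G₁ ⊔ G₂).edgeSet = Nat.card G₁.edgeSet + Nat.card G₂.edgeSet := by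
  simp only [edgeSet_sup, Nat.card_coe_set_eq]
  exact Set.ncard_union_eq (disjoint_edgeSet.2 h)

def cliqueOn (s : Finset V) : SimpleGraph V :=
  (⊤ : SimpleGraph s).map (Function.Embedding.subtype _)

theorem cliqueOn_adj {s : Finset V} {x y : V} :
    (cliqueOn s).Adj x y ↔ x ≠ y ∧ x ∈ s ∧ y ∈ s := by
  simp only [cliqueOn, map_adj, top_adj, Function.Embedding.subtype_apply]
  constructor
  · rintro ⟨x, y, hxy, rfl, rfl⟩
    exact ⟨Subtype.coe_injective.ne hxy, x.2, y.2⟩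
  · rintro ⟨hxy, hx, hy⟩
    exact ⟨⟨x, hx⟩, ⟨y, hy⟩, by simpa using hxy, rfl, rfl⟩

theorem natCard_edgeSet_cliqueOn (s : Finset V) :
    Nat.card (cliqueOn s).edgeSet = (#s).choose 2 := by
  classical
  rw [cliqueOn, edgeSet_map, Nat.card_image_of_injective (Function.Embedding.injective _),
    natCard_edgeSet_eq_card_edgeFinset, card_edgeFinset_top_eq_card_choose_two, Fintype.card_coe]

theorem two_mul_natCard_edgeSet_inf_cliqueOn_le [Fintype V] (G : SimpleGraph V)
    [DecidableRel G.Adj] (W : Finset V) :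
    2 * Nat.card (G ⊓ cliqueOn W).edgeSet ≤ ∑ x ∈ W, G.degree x := by
  classical
  rw [natCard_edgeSet_eq_card_edgeFinset, ← sum_degrees_eq_twice_card_edges,
    ← sum_subset (subset_univ W)]
  · exact sum_le_sum fun x _ => degree_le_of_le inf_le_left
  · intro x _ hx
    rw [← card_neighborFinset_eq_degree, card_eq_zero, eq_empty_iff_forall_notMem]
    intro y hy
    exact hx (cliqueOn_adj.1 ((mem_neighborFinset _ _ _).1 hy).2).2.1

-- Each `K₅` brings 10 edges for 5 vertices, so one more `K₅` turns the slack `7` of a small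
-- remainder into `2`.
theorem exists_cliquePacking [Finite V] (W : Finset V) :
    ∃ (K : SimpleGraph V) (κ : V → ℕ), (∀ x y, K.Adj x y → x ∈ W ∧ κ x = κ y) ∧
      (∀ t, #{x ∈ W | κ x = t} ≤ 5) ∧
      3 * #W ≤ 2 * Nat.card K.edgeSet + if #W < 5 then 7 else 2 := by
  classical
  induction hW : #W using Nat.strong_induction_on generalizing W with
  | _ c ih =>
    by_cases hc : c < 5
    · refine ⟨cliqueOn W, fun _ => 0, fun x y h => ⟨(cliqueOn_adj.1 h).2.1, rfl⟩,
        fun t => (card_filter_le _ _).trans (by omega), ?_⟩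
      rw [natCard_edgeSet_cliqueOn, hW, if_pos hc]
      interval_cases c <;> decide
    obtain ⟨A, hAW, hA⟩ := exists_subset_card_eq (show 5 ≤ #W by omega)
    obtain ⟨K, κ, hKadj, hκ, hK⟩ :=
      ih _ (by rw [card_sdiff_of_subset hAW]; omega) (W \ A) rfl
    have hKA : ∀ x y, K.Adj x y → x ∉ A := fun x y h => (mem_sdiff.1 (hKadj x y h).1).2
    refine ⟨cliqueOn A ⊔ K, fun x => if x ∈ A then 0 else κ x + 1, ?_, ?_, ?_⟩
    · rintro x y (h | h)
      · obtain ⟨-, hx, hy⟩ := cliqueOn_adj.1 h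
        simp [hx, hy, hAW hx]
      · simp [hKA x y h, hKA y x h.symm, (hKadj x y h).2, mem_sdiff.1 (hKadj x y h).1]
    · rintro (_ | t)
      · refine (card_le_card fun x hx => ?_).trans hA.le
        by_contra hxA
        simp [hxA] at hx
      · refine (card_le_card fun x hx => ?_).trans (hκ t)
        by_cases hxA : x ∈ A <;> simp_all
    · have hdisj : Disjoint (cliqueOn A) K :=
        disjoint_left.2 fun x y h hK => hKA x y hK (cliqueOn_adj.1 h).2.1
      rw [natCard_edgeSet_sup hdisj, natCard_edgeSet_cliqueOn, hA, if_neg hc,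
        show (5 : ℕ).choose 2 = 10 from rfl]
      rw [card_sdiff_of_subset hAW, hW, hA] at hK
      split_ifs at hK <;> omega

section BallTwo

def NoThreePathFrom (G : SimpleGraph V) (v : V) : Prop :=
  ∀ ⦃a b c⦄, G.Adj v a → G.Adj a b → G.Adj b c → b = v ∨ c = v ∨ c = a

variable [Fintype V] {G : SimpleGraph V} [DecidableRel G.Adj] {v x y : V}

theorem card_neighborFinset_filter_adj_le_one (hpath : G.NoThreePathFrom v)
    (hx : x ∈ G.neighborFinset v) : #{y ∈ G.neighborFinset v | G.Adj x y} ≤ 1 := by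
  rw [mem_neighborFinset] at hx
  rw [card_le_one]
  intro y hy z hz
  simp only [mem_filter, mem_neighborFinset] at hy hz
  rcases hpath hy.1 hy.2.symm hz.2 with h | h | h
  · exact absurd (h ▸ hx) G.irrefl
  · exact absurd (h ▸ hz.1) G.irrefl
  · exact h.symm

variable [DecidableEq V]

variable (G v) in
def secondNeighborFinset : Finset V :=
  {x | x ∉ insert v (G.neighborFinset v) ∧ ∃ u ∈ G.neighborFinset v, G.Adj u x}

variable (G v) in
def ballTwo : Finset V := insert v (G.neighborFinset v) ∪ G.secondNeighborFinset v

theorem eq_of_adj_of_mem_secondNeighborFinset (hpath : G.NoThreePathFrom v)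
    (hx : x ∈ G.secondNeighborFinset v) {u : V} (hu : G.Adj v u) (hux : G.Adj u x)
    (hxy : G.Adj x y) : y = u := by
  simp only [secondNeighborFinset, mem_filter, mem_univ, true_and, mem_insert,
    mem_neighborFinset, not_or] at hx
  obtain ⟨⟨hxv, hvx⟩, -⟩ := hx
  rcases hpath hu hux hxy with h | h | h
  · exact absurd h hxv
  · exact absurd (h ▸ hxy.symm) hvx
  · exact h

theorem degree_le_one_of_mem_secondNeighborFinset (hpath : G.NoThreePathFrom v)
    (hx : x ∈ G.secondNeighborFinset v) : G.degree x ≤ 1 := by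
  obtain ⟨u, hu, hux⟩ := (mem_filter.1 hx).2.2
  rw [mem_neighborFinset] at hu
  rw [← card_neighborFinset_eq_degree, card_le_one]
  intro y hy z hz
  rw [mem_neighborFinset] at hy hz
  rw [eq_of_adj_of_mem_secondNeighborFinset hpath hx hu hux hy,
    eq_of_adj_of_mem_secondNeighborFinset hpath hx hu hux hz]

theorem eq_or_mem_of_adj_of_mem_neighborFinset (hx : x ∈ G.neighborFinset v) (hxy : G.Adj x y) :
    y ∈ insert v (G.neighborFinset v) ∨ y ∈ G.secondNeighborFinset v := by
  by_cases hy : y ∈ insert v (G.neighborFinset v)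
  · exact Or.inl hy
  · exact Or.inr (mem_filter.2 ⟨mem_univ _, hy, x, hx, hxy⟩)

theorem mem_ballTwo_of_adj (hpath : G.NoThreePathFrom v) (hx : x ∈ G.ballTwo v)
    (hxy : G.Adj x y) : y ∈ G.ballTwo v := by
  rw [ballTwo, mem_union] at hx ⊢
  rcases hx with hx | hx
  obtain rfl | hx := mem_insert.1 hx
  · exact Or.inl (mem_insert_of_mem ((mem_neighborFinset _ _ _).2 hxy))
  · exact eq_or_mem_of_adj_of_mem_neighborFinset hx hxy
  · obtain ⟨u, hu, hux⟩ := (mem_filter.1 hx).2.2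
    rw [eq_of_adj_of_mem_secondNeighborFinset hpath hx ((mem_neighborFinset _ _ _).1 hu) hux hxy]
    exact Or.inl (mem_insert_of_mem hu)

theorem degree_le_of_mem_neighborFinset (hpath : G.NoThreePathFrom v)
    (hx : x ∈ G.neighborFinset v) :
    G.degree x ≤ 2 + #{y ∈ G.secondNeighborFinset v | G.Adj x y} := by
  set A := {y ∈ G.neighborFinset v | G.Adj x y}
  set B := {y ∈ G.secondNeighborFinset v | G.Adj x y}
  have hsub : G.neighborFinset x ⊆ insert v (A ∪ B) := by
    intro y hy
    rw [mem_neighborFinset] at hy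
    rcases eq_or_mem_of_adj_of_mem_neighborFinset hx hy with h | h
    · rw [mem_insert] at h ⊢
      exact h.imp_right fun h => mem_union_left _ (mem_filter.2 ⟨h, hy⟩)
    · exact mem_insert_of_mem (mem_union_right _ (mem_filter.2 ⟨h, hy⟩))
  have hA : #A ≤ 1 := card_neighborFinset_filter_adj_le_one hpath hx
  calc G.degree x = #(G.neighborFinset x) := (card_neighborFinset_eq_degree _ _).symm
    _ ≤ #(A ∪ B) + 1 := (card_le_card hsub).trans (card_insert_le _ _)
    _ ≤ 2 + #B := by have := card_union_le A B; omega

theorem sum_degree_ballTwo_le (hpath : G.NoThreePathFrom v) :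
    ∑ x ∈ G.ballTwo v, G.degree x ≤ 3 * (#(G.ballTwo v) - 1) := by
  set D := G.neighborFinset v
  set P := G.secondNeighborFinset v
  have hvD : v ∉ D := by simp [D]
  have hdisj : Disjoint (insert v D) P :=
    Finset.disjoint_left.2 fun x hx hxP => (mem_filter.1 hxP).2.1 hx
  have hP : ∑ x ∈ P, G.degree x ≤ #P := by
    simpa using sum_le_card_nsmul P _ 1 fun x hx =>
      degree_le_one_of_mem_secondNeighborFinset hpath hx
  have hDP : ∑ x ∈ D, #{y ∈ P | G.Adj x y} ≤ #P :=
    calc ∑ x ∈ D, #{y ∈ P | G.Adj x y} = ∑ y ∈ P, #{x ∈ D | G.Adj x y} :=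
          sum_card_bipartiteAbove_eq_sum_card_bipartiteBelow G.Adj
      _ ≤ ∑ y ∈ P, G.degree y := sum_le_sum fun y _ => by
          rw [← card_neighborFinset_eq_degree]
          exact card_le_card fun x hx => (mem_neighborFinset _ _ _).2 (mem_filter.1 hx).2.symm
      _ ≤ #P := hP
  have hD : ∑ x ∈ D, G.degree x ≤ 2 * #D + #P :=
    calc ∑ x ∈ D, G.degree x ≤ ∑ x ∈ D, (2 + #{y ∈ P | G.Adj x y}) :=
          sum_le_sum fun x hx => degree_le_of_mem_neighborFinset hpath hx
      _ = 2 * #D + ∑ x ∈ D, #{y ∈ P | G.Adj x y} := by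
          rw [sum_add_distrib, sum_const, smul_eq_mul, mul_comm]
      _ ≤ 2 * #D + #P := by omega
  have hv : G.degree v = #D := (card_neighborFinset_eq_degree _ _).symm
  rw [ballTwo, sum_union hdisj, sum_insert hvD, card_union_of_disjoint hdisj,
    card_insert_of_notMem hvD]
  omega

end BallTwo

end SimpleGraph

theorem tnStar_adj_of_rel {n : ℕ} (hn : 4 ≤ n) {i j : Fin n}
    (h : (i.val = 0 ∧ 1 ≤ j.val ∧ j.val ≤ n - 3) ∨ (i.val = n - 3 ∧ j.val = n - 2) ∨
      (i.val = n - 2 ∧ j.val = n - 1)) : (TnStar n).Adj i j := by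
  simp only [TnStar, fromRel_adj, ne_eq, Fin.ext_iff]
  exact ⟨by omega, Or.inl h⟩

theorem tnStar_preconnected {n : ℕ} (hn : 4 ≤ n) : (TnStar n).Preconnected := by
  have hroot : ∀ i : Fin n, (TnStar n).Reachable ⟨0, by omega⟩ i := by
    intro i
    have h₁ : (TnStar n).Reachable ⟨0, by omega⟩ ⟨n - 3, by omega⟩ :=
      (tnStar_adj_of_rel hn (by simp; omega)).reachable
    have h₂ := h₁.trans (tnStar_adj_of_rel hn (j := ⟨n - 2, by omega⟩) (by simp)).reachable
    have h₃ := h₂.trans (tnStar_adj_of_rel hn (j := ⟨n - 1, by omega⟩) (by simp)).reachable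
    obtain h | h | h | h :
        i.val = 0 ∨ (1 ≤ i.val ∧ i.val ≤ n - 3) ∨ i.val = n - 2 ∨ i.val = n - 1 := by
      omega
    · rw [show i = ⟨0, by omega⟩ from Fin.ext h]
    · exact (tnStar_adj_of_rel hn (Or.inl ⟨rfl, h⟩)).reachable
    · rwa [show i = ⟨n - 2, by omega⟩ from Fin.ext h]
    · rwa [show i = ⟨n - 1, by omega⟩ from Fin.ext h]
  exact fun i j => (hroot i).symm.trans (hroot j)

theorem containsCopy_tnStar {V : Type*} [Fintype V] [DecidableEq V] {G : SimpleGraph V}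
    [DecidableRel G.Adj] {n : ℕ} (hn : 4 ≤ n) {v a b c : V} (hdeg : n - 1 ≤ G.degree v)
    (hva : G.Adj v a) (hab : G.Adj a b) (hbc : G.Adj b c) (hbv : b ≠ v) (hcv : c ≠ v)
    (hca : c ≠ a) : ContainsCopy G (TnStar n) := by
  obtain ⟨m, rfl⟩ : ∃ m, n = m + 4 := ⟨n - 4, by omega⟩
  set S := G.neighborFinset v \ {a, b, c}
  have hm : m ≤ #S := by
    have h₁ : #(G.neighborFinset v) - #{a, b, c} ≤ #S := le_card_sdiff _ _
    have h₂ : #({a, b, c} : Finset V) ≤ 3 := card_le_three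
    rw [card_neighborFinset_eq_degree] at h₁
    omega
  set ℓ : Fin m → V := fun i => S.equivFin.symm (Fin.castLE hm i)
  have hℓ : Function.Injective ℓ :=
    Subtype.val_injective.comp (S.equivFin.symm.injective.comp (Fin.castLE_injective hm))
  have hℓS : ∀ i, ℓ i ∈ S := fun i => (S.equivFin.symm _).2
  simp only [S, mem_sdiff, mem_neighborFinset, mem_insert, mem_singleton, not_or] at hℓS
  -- `v₀ ↦ v`, the leaves `v₁, …, v_{n-4}` go to `ℓ`, and `v_{n-3}, v_{n-2}, v_{n-1}` to
  -- `a, b, c`.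
  set f : Fin (m + 4) → V := Fin.cons v (Fin.append ℓ ![a, b, c])
  have hf : Function.Injective f := by
    rw [Fin.cons_injective_iff, Fin.append_injective_iff]
    refine ⟨?_, hℓ, ?_, fun i j => ?_⟩
    · rintro ⟨i, hi⟩
      induction i using Fin.addCases with
      | left i => exact (hℓS i).1.ne (by simpa using hi.symm)
      | right j => fin_cases j <;> simp_all [hva.ne, eq_comm]
    · intro i j
      fin_cases i <;> fin_cases j <;> simp [hab.ne, hab.ne', hbc.ne, hbc.ne', hca, hca.symm]
    · fin_cases j <;> simp [hℓS i]
  have hrel : ∀ i j : Fin (m + 4), (i.val = 0 ∧ 1 ≤ j.val ∧ j.val ≤ m + 4 - 3) ∨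
      (i.val = m + 4 - 3 ∧ j.val = m + 4 - 2) ∨ (i.val = m + 4 - 2 ∧ j.val = m + 4 - 1) →
      G.Adj (f i) (f j) := by
    rintro ⟨i, hi⟩ ⟨j, hj⟩ h
    simp only at h
    obtain ⟨rfl, h1, h2⟩ | ⟨rfl, rfl⟩ | ⟨rfl, rfl⟩ := h
    · obtain ⟨k, rfl⟩ : ∃ k, j = k + 1 := ⟨j - 1, by omega⟩
      obtain hk | rfl := (by omega : k < m ∨ k = m)
      · simpa [f, Fin.cons, Fin.append, Fin.addCases, hk] using (hℓS ⟨k, hk⟩).1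
      · simpa [f, Fin.cons, Fin.append, Fin.addCases] using hva
    · simpa [f, Fin.cons, Fin.append, Fin.addCases] using hab
    · simpa [f, Fin.cons, Fin.append, Fin.addCases] using hbc
  refine ⟨⟨f, hf⟩, fun i j hij => ?_⟩
  simp only [TnStar, fromRel_adj] at hij
  exact hij.2.elim (hrel i j) fun h => (hrel j i h).symm

theorem not_containsCopy_sdiff_cliqueOn_sup {U V : Type*} [Fintype U] {T : SimpleGraph U}
    (hT : T.Preconnected) (hU : 5 < Fintype.card U) {G K : SimpleGraph V} {W : Finset V}
    {κ : V → ℕ} (hfree : ¬ ContainsCopy G T) (hW : ∀ x ∈ W, ∀ y, G.Adj x y → y ∈ W)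
    (hKadj : ∀ x y, K.Adj x y → x ∈ W ∧ κ x = κ y)
    (hκ : ∀ t, #{x ∈ W | κ x = t} ≤ 5) :
    ¬ ContainsCopy ((G \ cliqueOn W) ⊔ K) T := by
  classical
  rintro ⟨f, hf⟩
  set label : V → Option ℕ := fun x => if x ∈ W then some (κ x) else none
  have hlabel : ∀ x y, ((G \ cliqueOn W) ⊔ K).Adj x y → label x = label y := by
    rintro x y (⟨hxy, hW'⟩ | hxy)
    · have hx : x ∉ W := fun hx => hW' (cliqueOn_adj.2 ⟨hxy.ne, hx, hW x hx y hxy⟩)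
      have hy : y ∉ W := fun hy => hx (hW y hy x hxy.symm)
      simp [label, hx, hy]
    · simp [label, (hKadj x y hxy).1, (hKadj y x hxy.symm).1, (hKadj x y hxy).2]
  have hconst (a b : U) : label (f a) = label (f b) :=
    ((hT a b).map ⟨f, hf _ _⟩).apply_eq_of_adj_s4 hlabel
  obtain ⟨a₀⟩ : Nonempty U := Fintype.card_pos_iff.1 (by omega)
  by_cases h₀ : f a₀ ∈ W
  · have hcell : univ.map f ⊆ {x ∈ W | κ x = κ (f a₀)} := by
      intro x hx
      obtain ⟨a, -, rfl⟩ := mem_map.1 hx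
      have := hconst a a₀
      by_cases ha : f a ∈ W <;> simp_all [label]
    have := (card_le_card hcell).trans (hκ _)
    rw [card_map, card_univ] at this
    omega
  · refine hfree ⟨f, fun a b hab => ?_⟩
    have hout : f a ∉ W := fun ha => by simpa [label, ha, h₀] using hconst a a₀
    rcases hf a b hab with h | h
    · exact h.1
    · exact absurd (hKadj _ _ h).1 hout

theorem exists_denser_of_noThreePathFrom {V : Type*} [Fintype V] [DecidableEq V]
    {G : SimpleGraph V} [DecidableRel G.Adj] {n : ℕ} (hn : 6 ≤ n) {v : V}
    (hfree : ¬ ContainsCopy G (TnStar n)) (hpath : G.NoThreePathFrom v)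
    (hdeg : n - 1 ≤ G.degree v) :
    ∃ H : SimpleGraph V, ¬ ContainsCopy H (TnStar n) ∧
      Nat.card G.edgeSet < Nat.card H.edgeSet := by
  set W := G.ballTwo v
  have hW : n ≤ #W := by
    have hvD : v ∉ G.neighborFinset v := by simp
    have : #(insert v (G.neighborFinset v)) ≤ #W := card_le_card subset_union_left
    rw [card_insert_of_notMem hvD, card_neighborFinset_eq_degree] at this
    omega
  obtain ⟨K, κ, hKadj, hκ, hK⟩ := exists_cliquePacking W
  rw [if_neg (by omega)] at hK
  refine ⟨(G \ cliqueOn W) ⊔ K, not_containsCopy_sdiff_cliqueOn_sup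
    (tnStar_preconnected (by omega)) (by simp; omega) hfree
    (fun x hx y hxy => mem_ballTwo_of_adj hpath hx hxy) hKadj hκ, ?_⟩
  have hKW : K ≤ cliqueOn W := fun x y h =>
    cliqueOn_adj.2 ⟨h.ne, (hKadj x y h).1, (hKadj y x h.symm).1⟩
  have hG := natCard_edgeSet_sup (disjoint_inf_sdiff (x := G) (y := cliqueOn W))
  rw [sup_inf_sdiff] at hG
  have hH := natCard_edgeSet_sup
    (disjoint_sdiff_self_left.mono_right hKW : Disjoint (G \ cliqueOn W) K)
  have hin := two_mul_natCard_edgeSet_inf_cliqueOn_le G W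
  have hsum : ∑ x ∈ W, G.degree x ≤ 3 * (#W - 1) := sum_degree_ballTwo_le hpath
  omega

theorem natCard_edgeSet_le_exNum {p : ℕ} {U : Type*} {T : SimpleGraph U}
    {H : SimpleGraph (Fin p)} (hH : ¬ ContainsCopy H T) : Nat.card H.edgeSet ≤ exNum p T :=
  le_csSup ⟨Nat.card (Sym2 (Fin p)), by
    rintro _ ⟨G, -, rfl⟩
    exact Finite.card_subtype_le _⟩ ⟨H, hH, rfl⟩

theorem stmt4_general (p n : ℕ) (hn : 6 ≤ n) (G : SimpleGraph (Fin p))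
    (hfree : ¬ ContainsCopy G (TnStar n))
    (hext : Nat.card G.edgeSet = exNum p (TnStar n)) :
    ∀ v, Nat.card (G.neighborSet v) ≤ n - 2 := by
  classical
  intro v
  by_contra! hv
  have hdeg : n - 1 ≤ G.degree v := by
    rw [← card_neighborSet_eq_degree, ← Nat.card_eq_fintype_card]
    omega
  have hpath : G.NoThreePathFrom v := fun a b c hva hab hbc => by
    by_contra! h
    exact hfree (containsCopy_tnStar (by omega) hdeg hva hab hbc h.1 h.2.1 h.2.2)
  obtain ⟨H, hHfree, hlt⟩ := exists_denser_of_noThreePathFrom hn hfree hpath hdeg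
  have := natCard_edgeSet_le_exNum hHfree
  omega

theorem stmt4 (p n : ℕ) (hn : 6 ≤ n) (hp : n ≤ p) (G : SimpleGraph (Fin p))
    (hfree : ¬ ContainsCopy G (TnStar n))
    (hext : Nat.card G.edgeSet = exNum p (TnStar n)) :
    ∀ v, Nat.card (G.neighborSet v) ≤ n - 2 :=
  stmt4_general p n hn G hfree hext
end

section
/- Let p ≥ n ≥ 5 and let G be an extremal T_n*-free graph of order p. If v_0 ∈ V(G) has degree n−2, then the component of G containing v_0 is isomorphic to K_{n−1}. -/
open SimpleGraph

/-!
Write `N` for the neighbourhood of `v₀` and `B = N ∪ {v₀}`, so `|B| = n - 1`. A path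
`v₀ - x - y - z` together with `n - 4` further neighbours of `v₀` spans a copy of `T_n*`, and
such neighbours exist whenever `x ∈ N` and at most one of `y, z` lies in `N`. Hence every
vertex at distance two from `v₀` is a leaf hanging from some `u ∈ N`, and such a `u` has no
neighbour in `N`: the component of `v₀` is `B` with pendant leaves attached.

Without leaves the component has `n - 1` vertices, so adding an edge inside it cannot create a
copy of the connected `n`-vertex tree `T_n*`; by extremality the component is complete.
With leaves, detach them all (losing one edge per leaf), turn them into a star (regaining all
but one edge; a star contains no `T_n*`, which has two disjoint edges), and join `u` to two
further vertices of `N` (there are `n - 3 ≥ 2`). The component of `v₀` is then `B`, too small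
for `T_n*`, and the number of edges has gone up, contradicting extremality.
-/

open Finset

section Copies

variable {V W : Type*} {G G' K : SimpleGraph V} {H : SimpleGraph W}

theorem ContainsCopy.mono (hle : G ≤ G') : ContainsCopy G H → ContainsCopy G' H :=
  fun ⟨f, hf⟩ => ⟨f, fun a b h => hle (hf a b h)⟩

theorem SimpleGraph.Reachable.mem_of_forall_adj_s5 {T : Set V}
    (hT : ∀ a b, G.Adj a b → a ∈ T → b ∈ T) {a b : V} (h : G.Reachable a b) (ha : a ∈ T) :
    b ∈ T := by
  obtain ⟨w⟩ := h
  induction w with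
  | nil => exact ha
  | cons hadj _ ih => exact ih (hT _ _ hadj ha)

theorem SimpleGraph.Preconnected.apply_mem_of_forall_adj (hH : H.Preconnected) {f : W → V}
    (hf : ∀ a b, H.Adj a b → G.Adj (f a) (f b)) {T : Set V}
    (hT : ∀ a b, G.Adj a b → a ∈ T → b ∈ T) {a : W} (ha : f a ∈ T) (b : W) : f b ∈ T :=
  ((hH a b).map ⟨f, hf _ _⟩).mem_of_forall_adj_s5 hT ha

theorem SimpleGraph.support_edge_subset (x y : V) : (edge x y).support ⊆ {x, y} := by
  intro a ha
  obtain ⟨b, hab⟩ := (mem_support _).1 ha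
  rw [edge_adj] at hab
  rcases hab.1 with ⟨rfl, -⟩ | ⟨rfl, -⟩ <;> simp

theorem not_containsCopy_sup_of_support_subset [Fintype W] (hH : H.Preconnected)
    (hG : ¬ ContainsCopy G H) (t : Finset V) (ht : ∀ a b, G.Adj a b → a ∈ t → b ∈ t)
    (hcard : #t < Fintype.card W) (hK : K.support ⊆ t) : ¬ ContainsCopy (G ⊔ K) H := by
  rintro ⟨f, hf⟩
  have ht' : ∀ a b, (G ⊔ K).Adj a b → a ∈ (t : Set V) → b ∈ (t : Set V) := by
    rintro a b (h | h) ha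
    exacts [ht a b h ha, hK h.right_mem_support]
  obtain ⟨w₀⟩ : Nonempty W := Fintype.card_pos_iff.1 (by omega)
  by_cases h₀ : f w₀ ∈ t
  · have hmem := hH.apply_mem_of_forall_adj hf ht' h₀
    have := Fintype.card_le_of_injective (fun w => (⟨f w, hmem w⟩ : t))
      fun a b h => f.injective (congrArg Subtype.val h)
    simp only [Fintype.card_coe] at this
    omega
  · refine hG ⟨f, fun a b hab => (hf a b hab).resolve_right fun h => h₀ ?_⟩
    exact hH.apply_mem_of_forall_adj hf ht' (hK h.left_mem_support) w₀

theorem not_containsCopy_sup (hH : H.Preconnected) {G₁ G₂ : SimpleGraph V}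
    (hd : Disjoint G₁.support G₂.support) (h₁ : ¬ ContainsCopy G₁ H)
    (h₂ : ¬ ContainsCopy G₂ H) : ¬ ContainsCopy (G₁ ⊔ G₂) H := by
  rintro ⟨f, hf⟩
  have hclosed : ∀ a b, (G₁ ⊔ G₂).Adj a b → a ∈ G₁.support → b ∈ G₁.support := by
    rintro a b (h | h) ha
    · exact h.right_mem_support
    · exact absurd h.left_mem_support (Set.disjoint_left.1 hd ha)
  by_cases hW : ∃ w, f w ∈ G₁.support
  · obtain ⟨w₀, hw₀⟩ := hW
    refine h₁ ⟨f, fun a b hab => (hf a b hab).resolve_right fun h => ?_⟩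
    exact Set.disjoint_left.1 hd (hH.apply_mem_of_forall_adj hf hclosed hw₀ a)
      h.left_mem_support
  · simp only [not_exists] at hW
    exact h₂ ⟨f, fun a b hab => (hf a b hab).resolve_left fun h => hW a h.left_mem_support⟩

end Copies

section EdgeCount

variable {V : Type*} {G G₁ G₂ : SimpleGraph V}

theorem natCard_edgeSet_sup_edge [Finite V] {x y : V} (hn : ¬ G.Adj x y) (hxy : x ≠ y) :
    Nat.card (G ⊔ edge x y).edgeSet = Nat.card G.edgeSet + 1 := by
  classical
  have := Fintype.ofFinite V
  simp only [Nat.card_eq_fintype_card, ← edgeFinset_card]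
  exact G.card_edgeFinset_sup_edge hn hxy

theorem natCard_edgeSet_sup_of_disjoint_support [Finite V]
    (hd : Disjoint G₁.support G₂.support) :
    Nat.card (G₁ ⊔ G₂).edgeSet = Nat.card G₁.edgeSet + Nat.card G₂.edgeSet := by
  simp only [Nat.card_coe_set_eq, edgeSet_sup]
  refine Set.ncard_union_eq (Set.disjoint_left.2 fun e h₁ h₂ => ?_)
  induction e using Sym2.ind with
  | _ a b => exact Set.disjoint_left.1 hd h₁.left_mem_support h₂.left_mem_support

theorem exists_star_of_mem [Fintype V] {s : Finset V} {c : V} (hc : c ∈ s) :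
    ∃ Q : SimpleGraph V, Q.support ⊆ s ∧ (∀ a b, Q.Adj a b → a = c ∨ b = c) ∧
      Nat.card Q.edgeSet + 1 = #s := by
  classical
  refine ⟨(starGraph (⟨c, hc⟩ : s)).map (Function.Embedding.subtype _), ?_, ?_, ?_⟩
  · intro a h
    obtain ⟨b, hab⟩ := (mem_support _).1 h
    obtain ⟨a', b', -, rfl, rfl⟩ := (map_adj _ _ _ _).1 hab
    exact a'.2
  · intro a b hab
    obtain ⟨a', b', h, rfl, rfl⟩ := (map_adj _ _ _ _).1 hab
    rcases (starGraph_adj.1 h).2 with rfl | rfl <;> simp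
  · rw [Nat.card_eq_fintype_card, ← edgeFinset_card, card_edgeFinset_map,
      (isTree_starGraph _).card_edgeFinset, Fintype.card_coe]

variable [Fintype V] [DecidableEq V] [DecidableRel G.Adj]

theorem exists_le_disjoint_support (P : Finset V) :
    ∃ G₀ ≤ G, Disjoint G₀.support P ∧
      Nat.card G.edgeSet ≤ Nat.card G₀.edgeSet + ∑ p ∈ P, G.degree p := by
  refine ⟨G.deleteEdges ↑(P.biUnion (G.incidenceFinset ·)), deleteEdges_le _,
    Set.disjoint_left.2 fun a h ha => ?_, ?_⟩
  · obtain ⟨b, hab⟩ := (mem_support _).1 h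
    rw [deleteEdges_adj] at hab
    exact hab.2 (mem_biUnion.2
      ⟨a, ha, (mem_incidenceFinset _ _ _).2 ⟨hab.1, Sym2.mem_mk_left a b⟩⟩)
  · simp only [Nat.card_coe_set_eq, edgeSet_deleteEdges]
    refine (Set.ncard_le_ncard_sdiff_add_ncard G.edgeSet
      ↑(P.biUnion (G.incidenceFinset ·))).trans ?_
    rw [Set.ncard_coe_finset]
    gcongr
    exact card_biUnion_le.trans
      (sum_le_sum fun p _ => (card_incidenceFinset_eq_degree G p).le)
end EdgeCount

section Extremal

variable {W : Type*}

theorem le_exNum {p : ℕ} (H : SimpleGraph W) (G : SimpleGraph (Fin p))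
    (h : ¬ ContainsCopy G H) : Nat.card G.edgeSet ≤ exNum p H :=
  le_csSup ⟨Nat.card (Sym2 (Fin p)), by
    rintro m ⟨G', -, rfl⟩
    exact Nat.card_le_card_of_injective _ Subtype.val_injective⟩ ⟨G, h, rfl⟩

theorem isClique_supp_of_ncard_lt [Fintype W] {H : SimpleGraph W} (hH : H.Preconnected) {p : ℕ}
    {G : SimpleGraph (Fin p)} (hfree : ¬ ContainsCopy G H) (hext : Nat.card G.edgeSet = exNum p H)
    (C : G.ConnectedComponent) (hC : C.supp.ncard < Fintype.card W) : G.IsClique C.supp := by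
  classical
  intro x hx y hy hxy
  by_contra hadj
  have hfree' : ¬ ContainsCopy (G ⊔ edge x y) H := by
    refine not_containsCopy_sup_of_support_subset hH hfree C.supp.toFinset ?_
      (by rwa [← Set.ncard_eq_toFinset_card']) ((support_edge_subset x y).trans ?_)
    · simpa only [Set.mem_toFinset] using fun a b h ha => C.mem_supp_of_adj_mem_supp ha h
    · simp [Set.insert_subset_iff, hx, hy]
  have := le_exNum H _ hfree'
  rw [natCard_edgeSet_sup_edge hadj hxy, hext] at this
  omega

theorem SimpleGraph.IsClique.nonempty_induce_iso_top {V : Type*} {G : SimpleGraph V}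
    {s : Set V} (hs : G.IsClique s) [Finite s] {k : ℕ} (hk : s.ncard = k) :
    Nonempty (G.induce s ≃g (⊤ : SimpleGraph (Fin k))) := by
  rw [induce_eq_top.2 hs]
  exact ⟨Iso.completeGraph
    ((Finite.equivFin s).trans (finCongr (by rw [← hk, Nat.card_coe_set_eq])))⟩

end Extremal

section TnStar

variable {n : ℕ}

theorem TnStar.exists_adj_lt (hn : 4 ≤ n) (i : Fin n) (hi : i.val ≠ 0) :
    ∃ j, j < i ∧ (TnStar n).Adj j i := by
  have hlt := i.isLt
  simp only [TnStar, fromRel_adj, Fin.lt_def, ne_eq, Fin.ext_iff]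
  by_cases h : i.val ≤ n - 3
  · exact ⟨⟨0, by omega⟩, by simp; omega⟩
  · exact ⟨⟨i.val - 1, by omega⟩, by simp; omega⟩

theorem TnStar.preconnected (hn : 4 ≤ n) : (TnStar n).Preconnected := by
  have hroot : ∀ i : Fin n, (TnStar n).Reachable ⟨0, by omega⟩ i := by
    intro i
    induction i using WellFoundedLT.induction with
    | _ i ih =>
      by_cases hi : i.val = 0
      · rw [show i = ⟨0, by omega⟩ from Fin.ext hi]
      · obtain ⟨j, hji, hadj⟩ := TnStar.exists_adj_lt hn i hi
        exact (ih j hji).trans hadj.reachable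
  exact fun a b => (hroot a).symm.trans (hroot b)

variable {V : Type*} {G : SimpleGraph V}

theorem containsCopy_tnStar_of_path (hn : 4 ≤ n) {c x y z : V} (hcx : G.Adj c x)
    (hxy : G.Adj x y) (hyz : G.Adj y z) (hcy : c ≠ y) (hcz : c ≠ z) (hxz : x ≠ z)
    (L : Finset V) (hL : n - 4 ≤ #L) (hLc : ∀ v ∈ L, G.Adj c v)
    (hxL : x ∉ L) (hyL : y ∉ L) (hzL : z ∉ L) : ContainsCopy G (TnStar n) := by
  obtain ⟨L', hL'L, hL'⟩ := exists_subset_card_eq hL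
  let e : Fin (n - 4) ≃ L' := (L'.equivFinOfCardEq hL').symm
  let f : Fin n → V := fun i =>
    if i.val = 0 then c else if h : i.val - 1 < n - 4 then e ⟨i.val - 1, h⟩
    else if i.val = n - 3 then x else if i.val = n - 2 then y else z
  have hmem : ∀ k, (e k : V) ∈ L := fun k => hL'L (e k).2
  have hc : ∀ k, c ≠ e k := fun k => (hLc _ (hmem k)).ne
  have hinj : Function.Injective f := by
    intro i j hij
    have hi := i.isLt
    have hj := j.isLt
    ext
    simp only [f] at hij
    split_ifs at hij <;> grind [hcx.ne, hxy.ne, hyz.ne, e.injective, Subtype.ext_iff]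
  have hadj : ∀ i j : Fin n, (i.val = 0 ∧ 1 ≤ j.val ∧ j.val ≤ n - 3) ∨
      (i.val = n - 3 ∧ j.val = n - 2) ∨ (i.val = n - 2 ∧ j.val = n - 1) →
      G.Adj (f i) (f j) := by
    intro i j h
    simp only [f]
    split_ifs <;> first | omega | exact hLc _ (hmem _)
  refine ⟨⟨f, hinj⟩, fun i j hij => ?_⟩
  rcases (fromRel_adj _ _ _).1 hij with ⟨-, h | h⟩
  · exact hadj i j h
  · exact (hadj j i h).symm

theorem not_containsCopy_tnStar_of_forall_adj (hn : 4 ≤ n) (c : V)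
    (hc : ∀ a b, G.Adj a b → a = c ∨ b = c) : ¬ ContainsCopy G (TnStar n) := by
  rintro ⟨f, hf⟩
  have h₁ := hc _ _ (hf ⟨0, by omega⟩ ⟨1, by omega⟩ (by simp [TnStar, Fin.ext_iff]; omega))
  have h₂ := hc _ _
    (hf ⟨n - 2, by omega⟩ ⟨n - 1, by omega⟩ (by simp [TnStar, Fin.ext_iff]; omega))
  rcases h₁ with h₁ | h₁ <;> rcases h₂ with h₂ | h₂ <;>
    have := congrArg Fin.val (f.injective (h₁.trans h₂.symm)) <;> simp at this <;> omega

end TnStar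

section Neighbourhood

variable {n : ℕ} {V : Type*} [Fintype V] [DecidableEq V] {G : SimpleGraph V}
  [DecidableRel G.Adj] {v₀ : V}

theorem eq_of_adj_of_not_adj (hn : 4 ≤ n) (hfree : ¬ ContainsCopy G (TnStar n))
    (hdeg : n - 2 ≤ G.degree v₀) {u w z : V} (hu : G.Adj v₀ u) (hw : ¬ G.Adj v₀ w)
    (hwv₀ : w ≠ v₀) (huw : G.Adj u w) (hwz : G.Adj w z) : z = u := by
  by_contra hzu
  refine hfree (containsCopy_tnStar_of_path hn hu huw hwz hwv₀.symm ?_ (Ne.symm hzu)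
    (G.neighborFinset v₀ \ {u, z}) ?_ (by simp +contextual) (by simp) (by simp [hw]) (by simp))
  · rintro rfl
    exact hw hwz.symm
  · have := le_card_sdiff {u, z} (G.neighborFinset v₀)
    have := card_le_two (a := u) (b := z)
    rw [card_neighborFinset_eq_degree] at *
    omega

theorem not_adj_of_adj_of_not_adj (hn : 4 ≤ n) (hfree : ¬ ContainsCopy G (TnStar n))
    (hdeg : n - 2 ≤ G.degree v₀) {u w x : V} (hu : G.Adj v₀ u) (hw : ¬ G.Adj v₀ w)
    (hwv₀ : w ≠ v₀) (huw : G.Adj u w) (hx : G.Adj v₀ x) : ¬ G.Adj u x := by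
  intro hux
  refine hfree (containsCopy_tnStar_of_path hn hx hux.symm huw hu.ne hwv₀.symm ?_
    (G.neighborFinset v₀ \ {x, u}) ?_ (by simp +contextual) (by simp) (by simp) (by simp [hw]))
  · rintro rfl
    exact hw hx
  · have := le_card_sdiff {x, u} (G.neighborFinset v₀)
    have := card_le_two (a := x) (b := u)
    rw [card_neighborFinset_eq_degree] at *
    omega

theorem exists_adj_adj_of_reachable (hn : 4 ≤ n) (hfree : ¬ ContainsCopy G (TnStar n))
    (hdeg : n - 2 ≤ G.degree v₀) {x : V} (hx : G.Reachable v₀ x) :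
    x = v₀ ∨ G.Adj v₀ x ∨ ∃ u, G.Adj v₀ u ∧ G.Adj u x := by
  refine hx.mem_of_forall_adj_s5 (T := {x | x = v₀ ∨ G.Adj v₀ x ∨ ∃ u, G.Adj v₀ u ∧ G.Adj u x})
    ?_ (Or.inl rfl)
  rintro a b hab (rfl | ha | ⟨u, hu, hua⟩)
  · exact Or.inr (Or.inl hab)
  · exact Or.inr (Or.inr ⟨a, ha, hab⟩)
  · by_cases hav₀ : a = v₀
    · exact Or.inr (Or.inl (hav₀ ▸ hab))
    by_cases ha : G.Adj v₀ a
    · exact Or.inr (Or.inr ⟨a, ha, hab⟩)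
    exact Or.inr (Or.inl (eq_of_adj_of_not_adj hn hfree hdeg hu ha hav₀ hua hab ▸ hu))

theorem degree_le_one_of_reachable (hn : 4 ≤ n) (hfree : ¬ ContainsCopy G (TnStar n))
    (hdeg : n - 2 ≤ G.degree v₀) {p : V} (hp : G.Reachable v₀ p) (hpv₀ : p ≠ v₀)
    (hpN : ¬ G.Adj v₀ p) : G.degree p ≤ 1 := by
  obtain ⟨u, hu, hup⟩ :=
    ((exists_adj_adj_of_reachable hn hfree hdeg hp).resolve_left hpv₀).resolve_left hpN
  rw [← card_neighborFinset_eq_degree, card_le_one]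
  intro a ha b hb
  rw [mem_neighborFinset] at ha hb
  rw [eq_of_adj_of_not_adj hn hfree hdeg hu hpN hpv₀ hup ha,
    eq_of_adj_of_not_adj hn hfree hdeg hu hpN hpv₀ hup hb]

theorem exists_tnStarFree_isolate_leaves (hn : 4 ≤ n) (hfree : ¬ ContainsCopy G (TnStar n))
    {B P : Finset V} (hBP : Disjoint B P) (hP : P.Nonempty) (hleaf : ∀ p ∈ P, G.degree p ≤ 1)
    (hB : ∀ a b, G.Adj a b → a ∈ B → b ∈ B ∨ b ∈ P) :
    ∃ G₁ : SimpleGraph V, ¬ ContainsCopy G₁ (TnStar n) ∧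
      Nat.card G.edgeSet ≤ Nat.card G₁.edgeSet + 1 ∧
      ∀ a b, G₁.Adj a b → a ∈ B → b ∈ B ∧ G.Adj a b := by
  obtain ⟨G₀, hG₀, hG₀P, hcard⟩ := exists_le_disjoint_support (G := G) P
  obtain ⟨w, hw⟩ := hP
  obtain ⟨Q, hQP, hQw, hQcard⟩ := exists_star_of_mem hw
  have hG₀Q : Disjoint G₀.support Q.support := hG₀P.mono_right hQP
  have hsum : ∑ p ∈ P, G.degree p ≤ #P :=
    (sum_le_sum hleaf).trans_eq (card_eq_sum_ones P).symm
  refine ⟨G₀ ⊔ Q, not_containsCopy_sup (TnStar.preconnected hn) hG₀Q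
    (fun h => hfree (h.mono hG₀)) (not_containsCopy_tnStar_of_forall_adj hn w hQw), ?_, ?_⟩
  · rw [natCard_edgeSet_sup_of_disjoint_support hG₀Q]
    omega
  · rintro a b (h | h) ha
    · refine ⟨(hB a b (hG₀ h) ha).resolve_right fun hb => ?_, hG₀ h⟩
      exact Set.disjoint_left.1 hG₀P h.right_mem_support hb
    · exact absurd (hQP h.left_mem_support) (disjoint_left.1 hBP ha)

theorem exists_tnStarFree_natCard_edgeSet_gt (hn : 5 ≤ n) (hfree : ¬ ContainsCopy G (TnStar n))
    (hdeg : G.degree v₀ = n - 2) {w : V} (hw : G.Reachable v₀ w) (hwv₀ : w ≠ v₀)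
    (hwN : ¬ G.Adj v₀ w) :
    ∃ G' : SimpleGraph V, ¬ ContainsCopy G' (TnStar n) ∧
      Nat.card G.edgeSet < Nat.card G'.edgeSet := by
  have hn4 : 4 ≤ n := by omega
  set B := insert v₀ (G.neighborFinset v₀) with hB
  set P := univ.filter (G.Reachable v₀ ·) \ B with hP
  have hmemB : ∀ x, x ∈ B ↔ x = v₀ ∨ G.Adj v₀ x := by simp [hB]
  have hmemP : ∀ x, x ∈ P ↔ G.Reachable v₀ x ∧ x ∉ B := by simp [hP]
  obtain ⟨G₁, hfree₁, hcard₁, hB₁⟩ := exists_tnStarFree_isolate_leaves hn4 hfree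
    (B := B) (P := P) disjoint_sdiff ⟨w, (hmemP w).2 ⟨hw, by simp [hmemB, hwv₀, hwN]⟩⟩
    (fun p hp => by
      obtain ⟨hpr, hpB⟩ := (hmemP p).1 hp
      simp only [hmemB, not_or] at hpB
      exact degree_le_one_of_reachable hn4 hfree hdeg.ge hpr hpB.1 hpB.2)
    (fun a b hab ha => by
      by_contra! hb
      refine hb.2 ((hmemP b).2 ⟨?_, hb.1⟩)
      rcases (hmemB a).1 ha with rfl | ha
      exacts [hab.reachable, ha.reachable.trans hab.reachable])
  obtain ⟨u, hu, huw⟩ : ∃ u, G.Adj v₀ u ∧ G.Adj u w :=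
    ((exists_adj_adj_of_reachable hn4 hfree hdeg.ge hw).resolve_left hwv₀).resolve_left hwN
  obtain ⟨x₁, hx₁, x₂, hx₂, hx₁₂⟩ : ∃ x₁ ∈ (G.neighborFinset v₀).erase u,
      ∃ x₂ ∈ (G.neighborFinset v₀).erase u, x₁ ≠ x₂ := by
    refine one_lt_card.1 ?_
    rw [card_erase_of_mem ((mem_neighborFinset _ _ _).2 hu), card_neighborFinset_eq_degree, hdeg]
    omega
  simp only [mem_erase, mem_neighborFinset] at hx₁ hx₂
  have hux : ∀ x, G.Adj v₀ x → ¬ G₁.Adj u x := fun x hx h =>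
    not_adj_of_adj_of_not_adj hn4 hfree hdeg.ge hu hwN hwv₀ huw hx
      (hB₁ u x h ((hmemB u).2 (Or.inr hu))).2
  refine ⟨G₁ ⊔ edge u x₁ ⊔ edge u x₂, ?_, ?_⟩
  · have hsub : ∀ x, G.Adj v₀ x → (edge u x).support ⊆ B := fun x hx =>
      (support_edge_subset u x).trans (by simp [Set.insert_subset_iff, hmemB, hu, hx])
    rw [sup_assoc]
    refine not_containsCopy_sup_of_support_subset (TnStar.preconnected hn4) hfree₁ B
      (fun a b h ha => (hB₁ a b h ha).1) ?_ fun a ha => ?_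
    · rw [hB, card_insert_of_notMem (by simp), card_neighborFinset_eq_degree, hdeg,
        Fintype.card_fin]
      omega
    · obtain ⟨b, h | h⟩ := (mem_support _).1 ha
      exacts [hsub x₁ hx₁.2 h.left_mem_support, hsub x₂ hx₂.2 h.left_mem_support]
  · have h₂ : ¬ (G₁ ⊔ edge u x₁).Adj u x₂ := by
      rintro (h | h)
      · exact hux x₂ hx₂.2 h
      · rw [edge_adj] at h
        grind
    rw [natCard_edgeSet_sup_edge h₂ (Ne.symm hx₂.1),
      natCard_edgeSet_sup_edge (hux x₁ hx₁.2) (Ne.symm hx₁.1)]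
    omega

end Neighbourhood

theorem stmt5_general (p n : ℕ) (hn : 5 ≤ n) (G : SimpleGraph (Fin p))
    (hfree : ¬ ContainsCopy G (TnStar n))
    (hext : Nat.card G.edgeSet = exNum p (TnStar n))
    (v₀ : Fin p) (hdeg : Nat.card (G.neighborSet v₀) = n - 2) :
    Nonempty (G.induce (G.connectedComponentMk v₀).supp ≃g
      (⊤ : SimpleGraph (Fin (n - 1)))) := by
  classical
  set C := G.connectedComponentMk v₀
  have hsupp : C.supp = insert v₀ (G.neighborSet v₀) := by
    refine subset_antisymm (fun w hw => ?_) (Set.insert_subset_iff.2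
      ⟨ConnectedComponent.connectedComponentMk_mem, fun u hu => C.mem_supp_of_adj_mem_supp rfl hu⟩)
    by_contra hw'
    simp only [Set.mem_insert_iff, mem_neighborSet, not_or] at hw'
    obtain ⟨G', hG', hlt⟩ := exists_tnStarFree_natCard_edgeSet_gt hn hfree
      (by rwa [← card_neighborSet_eq_degree, ← Nat.card_eq_fintype_card])
      (C.reachable_of_mem_supp rfl hw) hw'.1 hw'.2
    exact (le_exNum _ G' hG').not_gt (hext ▸ hlt)
  have hcard : C.supp.ncard = n - 1 := by
    rw [hsupp, Set.ncard_insert_of_notMem (by simp), ← Nat.card_coe_set_eq, hdeg]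
    omega
  exact (isClique_supp_of_ncard_lt (TnStar.preconnected (by omega)) hfree hext C
    (by simp only [hcard, Fintype.card_fin]; omega)).nonempty_induce_iso_top hcard

theorem stmt5 (p n : ℕ) (hn : 5 ≤ n) (hp : n ≤ p) (G : SimpleGraph (Fin p))
    (hfree : ¬ ContainsCopy G (TnStar n))
    (hext : Nat.card G.edgeSet = exNum p (TnStar n))
    (v₀ : Fin p) (hdeg : Nat.card (G.neighborSet v₀) = n - 2) :
    Nonempty (G.induce (G.connectedComponentMk v₀).supp ≃g
      (⊤ : SimpleGraph (Fin (n - 1)))) :=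
  stmt5_general p n hn G hfree hext v₀ hdeg
end

section
/- Let p ≥ n−1 ≥ 5 and write p = k(n−1)+r with k ≥ 1 and r ∈ {0,1,…,n−2}. If r ∈ {0, n−4, n−3, n−2}, then ex(p;T_n*) = ((n−2)p − r(n−1−r))/2. -/
/-!
A path `a b c d` in a `T_n^*`-free graph forces `deg a ≤ n - 4 + [a ~ c] + [a ~ d]`: otherwise
`a`, `n - 4` further neighbours of `a` and the path span a copy of `T_n^*`. Hence, if
`deg a ≥ n - 3` in a connected such graph, every vertex outside `N(a)` has all its neighbours in
`N(a)`. Counting the edges across `N(a)` and splitting by the maximum degree (`≥ n - 1`, `= n - 2`,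
`≤ n - 3`) shows that a connected `T_n^*`-free graph of order `m` has
`2e ≤ (n - 2) m - deficit n m`. Summing over the components, it remains to see that the deficits
of parts adding up to `p ≡ r (mod n - 1)` total at least `r (n - 1 - r)` for the four admissible
residues `r`; this rests on the subadditivity of `x ↦ (x mod d) (d - x mod d)`. Disjoint copies of
`K_{n-1}` and one `K_r` attain the bound.
-/

open SimpleGraph

open Finset

section Basic

variable {V : Type*} {G : SimpleGraph V} {n : ℕ}

theorem containsCopy_tnStar_of_nodup {a b c d : V} {W : List V} (hlen : W.length + 4 = n)
    (hnodup : (a :: W ++ [b, c, d]).Nodup) (haW : ∀ w ∈ W, G.Adj a w)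
    (hab : G.Adj a b) (hbc : G.Adj b c) (hcd : G.Adj c d) :
    ContainsCopy G (TnStar n) := by
  subst hlen
  set L := a :: W ++ [b, c, d] with hL
  have hadj : ∀ (x y : ℕ) (hx : x < L.length) (hy : y < L.length),
      (x = 0 ∧ 1 ≤ y ∧ y ≤ W.length + 4 - 3) ∨ (x = W.length + 4 - 3 ∧ y = W.length + 4 - 2) ∨
        (x = W.length + 4 - 2 ∧ y = W.length + 4 - 1) → G.Adj L[x] L[y] := by
    rintro x y hx hy (⟨rfl, h1, h2⟩ | ⟨rfl, rfl⟩ | ⟨rfl, rfl⟩)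
    · obtain ⟨i, rfl⟩ : ∃ i, y = i + 1 := ⟨y - 1, by omega⟩
      rcases lt_or_eq_of_le (show i ≤ W.length by omega) with hi | rfl
      · simpa [hL, List.getElem_append_left hi] using haW _ (List.getElem_mem hi)
      · simpa [hL] using hab
    · simpa [hL, show W.length + 4 - 3 = W.length + 1 by omega,
        show W.length + 4 - 2 = W.length + 2 by omega] using hbc
    · simpa [hL, show W.length + 4 - 1 = W.length + 3 by omega,
        show W.length + 4 - 2 = W.length + 2 by omega] using hcd
  refine ⟨⟨fun i => L[i.val]'(by simp [hL]; omega),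
    fun i j h => Fin.ext (hnodup.getElem_inj_iff.mp h)⟩, ?_⟩
  rintro x y ⟨-, h | h⟩
  · exact hadj x y _ _ h
  · exact (hadj y x _ _ h).symm

theorem ContainsCopy.of_induce {s : Set V} {W : Type*} {H : SimpleGraph W}
    (h : ContainsCopy (G.induce s) H) : ContainsCopy G H := by
  obtain ⟨f, hf⟩ := h
  exact ⟨f.trans (Function.Embedding.subtype _), hf⟩

theorem SimpleGraph.Connected.forall_of_closed_under_adj (hG : G.Connected) {P : V → Prop} {a : V}
    (ha : P a) (hP : ∀ u v, G.Adj u v → P u → P v) (v : V) : P v := by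
  obtain ⟨w⟩ := hG.preconnected a v
  induction w with
  | nil => exact ha
  | cons h _ ih => exact ih (hP _ _ h ha)

end Basic

section DegreeSums

variable {V : Type*} [Fintype V] {G : SimpleGraph V} [DecidableRel G.Adj]

theorem SimpleGraph.sum_degree_le_mul_card {k : ℕ} (hk : ∀ v, G.degree v ≤ k) :
    ∑ v, G.degree v ≤ k * Fintype.card V := by
  simpa [mul_comm] using sum_le_card_nsmul univ (fun v => G.degree v) k fun v _ => hk v

variable [DecidableEq V]

theorem sum_degree_compl_eq (B : Finset V) (h : ∀ y ∉ B, G.neighborFinset y ⊆ B) :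
    ∑ y ∈ Bᶜ, G.degree y = ∑ x ∈ B, #(G.neighborFinset x \ B) := by
  have := sum_card_bipartiteAbove_eq_sum_card_bipartiteBelow (s := Bᶜ) (t := B) (r := G.Adj)
  convert this using 2 with y hy x
  · rw [← card_neighborFinset_eq_degree, bipartiteAbove,
      ← inter_eq_left.mpr (h y (by simpa using hy))]
    congr 1; ext; simp [and_comm]
  · congr 1; ext; simp [bipartiteBelow, adj_comm, and_comm]

theorem sum_degree_le_of_card_inter_le (B : Finset V) (h : ∀ y ∉ B, G.neighborFinset y ⊆ B)
    {k : ℕ} (hk : ∀ x ∈ B, #(G.neighborFinset x ∩ B) ≤ k) :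
    ∑ v, G.degree v ≤ k * #B + 2 * ∑ y ∈ Bᶜ, G.degree y := by
  have hB : ∑ x ∈ B, G.degree x ≤ ∑ x ∈ B, (k + #(G.neighborFinset x \ B)) :=
    sum_le_sum fun x hx => by
      rw [← card_neighborFinset_eq_degree, ← card_inter_add_card_sdiff _ B]
      exact Nat.add_le_add_right (hk x hx) _
  rw [sum_add_distrib, sum_const, smul_eq_mul, ← sum_degree_compl_eq B h] at hB
  rw [← sum_add_sum_compl B]
  linarith

theorem sum_degree_le_two_mul_sum (B : Finset V) (h : ∀ y ∉ B, G.neighborFinset y ⊆ B) :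
    ∑ v, G.degree v ≤ 2 * ∑ x ∈ B, G.degree x := by
  have : ∑ x ∈ B, #(G.neighborFinset x \ B) ≤ ∑ x ∈ B, G.degree x :=
    sum_le_sum fun x _ => (card_le_card sdiff_subset).trans (card_neighborFinset_eq_degree G x).le
  rw [← sum_add_sum_compl B, sum_degree_compl_eq B h]
  omega

end DegreeSums

section TnStarFree

variable {V : Type*} [Fintype V] [DecidableEq V] {G : SimpleGraph V} [DecidableRel G.Adj]
  {n : ℕ} {a b c d : V}

-- Otherwise `a`, `n - 4` of these neighbours and the path `b c d` span a copy of `T_n^*`.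
theorem card_neighborFinset_sdiff_add_five_le (hn : 4 ≤ n) (hfree : ¬ ContainsCopy G (TnStar n))
    (hab : G.Adj a b) (hbc : G.Adj b c) (hcd : G.Adj c d) (hac : a ≠ c) (had : a ≠ d)
    (hbd : b ≠ d) : #(G.neighborFinset a \ {b, c, d}) + 5 ≤ n := by
  by_contra! h
  obtain ⟨W, hW, hWcard⟩ :=
    exists_subset_card_eq (show n - 4 ≤ #(G.neighborFinset a \ {b, c, d}) by omega)
  have hWa : ∀ w ∈ W, G.Adj a w ∧ w ≠ b ∧ w ≠ c ∧ w ≠ d := fun w hw => by simpa using hW hw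
  have haW : a ∉ W := fun h => G.loopless.irrefl a (hWa a h).1
  refine hfree (containsCopy_tnStar_of_nodup (W := W.toList) (by simp; omega) ?_
    (fun w hw => (hWa w (mem_toList.mp hw)).1) hab hbc hcd)
  simpa [haW, hab.ne, hac, had, List.nodup_append, nodup_toList, hbc.ne, hbd, hcd.ne] using
    fun w hw => (hWa w hw).2

theorem degree_add_five_le_of_inter_subset (hn : 4 ≤ n) (hfree : ¬ ContainsCopy G (TnStar n))
    (hab : G.Adj a b) (hbc : G.Adj b c) (hcd : G.Adj c d) (hac : a ≠ c) (had : a ≠ d)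
    (hbd : b ≠ d) {s : Finset V} (hs : G.neighborFinset a ∩ {b, c, d} ⊆ s) :
    G.degree a + 5 ≤ n + #s := by
  have h := card_sdiff_add_card_inter (G.neighborFinset a) {b, c, d}
  rw [card_neighborFinset_eq_degree] at h
  have := card_neighborFinset_sdiff_add_five_le hn hfree hab hbc hcd hac had hbd
  have := card_le_card hs
  omega

theorem degree_add_two_le_of_path (hn : 4 ≤ n) (hfree : ¬ ContainsCopy G (TnStar n))
    (hab : G.Adj a b) (hbc : G.Adj b c) (hcd : G.Adj c d) (hac : a ≠ c) (had : a ≠ d)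
    (hbd : b ≠ d) : G.degree a + 2 ≤ n := by
  have := degree_add_five_le_of_inter_subset hn hfree hab hbc hcd hac had hbd inter_subset_right
  have : #({b, c, d} : Finset V) ≤ 3 := card_le_three
  omega

theorem adj_and_adj_of_path (hn : 4 ≤ n) (hfree : ¬ ContainsCopy G (TnStar n))
    (hdeg : n - 2 ≤ G.degree a) (hab : G.Adj a b) (hbc : G.Adj b c) (hcd : G.Adj c d)
    (hac : a ≠ c) (had : a ≠ d) (hbd : b ≠ d) : G.Adj a c ∧ G.Adj a d := by
  have h2 : ∀ x y : V, #({x, y} : Finset V) ≤ 2 := fun _ _ => card_le_two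
  constructor <;> by_contra hna
  · have := degree_add_five_le_of_inter_subset hn hfree hab hbc hcd hac had hbd (s := {b, d})
      (by intro x; simp only [mem_inter, mem_neighborFinset, mem_insert, mem_singleton]; aesop)
    have := h2 b d
    omega
  · have := degree_add_five_le_of_inter_subset hn hfree hab hbc hcd hac had hbd (s := {b, c})
      (by intro x; simp only [mem_inter, mem_neighborFinset, mem_insert, mem_singleton]; aesop)
    have := h2 b c
    omega

theorem adj_or_adj_of_path (hn : 4 ≤ n) (hfree : ¬ ContainsCopy G (TnStar n))
    (hdeg : n - 3 ≤ G.degree a) (hab : G.Adj a b) (hbc : G.Adj b c) (hcd : G.Adj c d)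
    (hac : a ≠ c) (had : a ≠ d) (hbd : b ≠ d) : G.Adj a c ∨ G.Adj a d := by
  by_contra! hna
  have := degree_add_five_le_of_inter_subset hn hfree hab hbc hcd hac had hbd (s := {b})
    (by intro x; simp only [mem_inter, mem_neighborFinset, mem_insert, mem_singleton]; aesop)
  rw [card_singleton] at this
  omega

theorem neighborFinset_subset_of_not_adj (hn : 4 ≤ n) (hfree : ¬ ContainsCopy G (TnStar n))
    (hconn : G.Connected) (hdeg : n - 3 ≤ G.degree a) {y : V} (hy : ¬ G.Adj a y) :
    G.neighborFinset y ⊆ G.neighborFinset a := by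
  suffices h : ∀ y, G.Adj a y ∨ ∀ w, G.Adj y w → G.Adj a w by
    intro w hw
    simpa using (h y).resolve_left hy w (by simpa using hw)
  refine hconn.forall_of_closed_under_adj (Or.inr fun _ => id) fun y w hyw => ?_
  rintro (hay | hsub)
  · by_cases hwa : w = a
    · exact Or.inr fun _ => hwa ▸ id
    by_cases haw : G.Adj a w
    · exact Or.inl haw
    refine Or.inr fun z hwz => ?_
    by_cases hzy : z = y
    · exact hzy ▸ hay
    have hza : z ≠ a := by rintro rfl; exact haw hwz.symm
    exact (adj_or_adj_of_path hn hfree hdeg hay hyw hwz (Ne.symm hwa) (Ne.symm hza)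
      (Ne.symm hzy)).resolve_left haw
  · exact Or.inl (hsub w hyw)

theorem degree_le_one_of_not_adj (hn : 4 ≤ n) (hfree : ¬ ContainsCopy G (TnStar n))
    (hdeg : n - 2 ≤ G.degree a) {y : V} (hya : y ≠ a) (hay : ¬ G.Adj a y)
    (hsub : G.neighborFinset y ⊆ G.neighborFinset a) : G.degree y ≤ 1 := by
  rw [← card_neighborFinset_eq_degree, card_le_one]
  intro w₁ h₁ w₂ h₂
  by_contra hne
  have ha₁ : G.Adj a w₁ := by simpa using hsub h₁
  have ha₂ : G.Adj a w₂ := by simpa using hsub h₂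
  rw [mem_neighborFinset] at h₁ h₂
  exact hay (adj_and_adj_of_path hn hfree hdeg ha₁ h₁.symm h₂ (Ne.symm hya) ha₂.ne hne).1

theorem card_neighborFinset_inter_le_one (hn : 4 ≤ n) (hfree : ¬ ContainsCopy G (TnStar n))
    (hdeg : n - 1 ≤ G.degree a) {x : V} (hx : G.Adj a x) :
    #(G.neighborFinset x ∩ G.neighborFinset a) ≤ 1 := by
  rw [card_le_one]
  intro w₁ h₁ w₂ h₂
  by_contra hne
  simp only [mem_inter, mem_neighborFinset] at h₁ h₂
  have := degree_add_two_le_of_path hn hfree h₁.2 h₁.1.symm h₂.1 hx.ne h₂.2.ne hne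
  omega

theorem card_neighborFinset_inter_le (hn : 4 ≤ n) (hfree : ¬ ContainsCopy G (TnStar n))
    (hconn : G.Connected) (hdeg : G.degree a = n - 2) {y : V} (hya : y ≠ a) (hay : ¬ G.Adj a y)
    {x : V} (hx : G.Adj a x) : #(G.neighborFinset x ∩ G.neighborFinset a) ≤ n - 4 := by
  have hclosed : ∀ x w, G.Adj a x → G.Adj a w → G.Adj x w → ¬ G.Adj x y := by
    intro x w hax haw hxw hxy
    by_cases hwy : w = y
    · exact hay (hwy ▸ haw)
    exact hay (adj_and_adj_of_path hn hfree hdeg.ge haw hxw.symm hxy hax.ne (Ne.symm hya) hwy).2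
  obtain ⟨x₀, hyx₀⟩ := (G.degree_pos_iff_exists_adj y).mp
    (Reachable.degree_pos_left hya (hconn.preconnected y a))
  have hax₀ : G.Adj a x₀ := by
    simpa using neighborFinset_subset_of_not_adj hn hfree hconn (by omega) hay (by simpa using hyx₀)
  by_contra! hlarge
  have hsub : G.neighborFinset x ∩ G.neighborFinset a ⊆ (G.neighborFinset a).erase x :=
    fun w hw => mem_erase.mpr ⟨fun h => G.loopless.irrefl x (by simp_all), (mem_inter.mp hw).2⟩
  have heq := eq_of_subset_of_card_le hsub (by
    rw [card_erase_of_mem (by simpa using hx), card_neighborFinset_eq_degree]; omega)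
  by_cases hx₀ : x₀ = x
  · obtain ⟨w, hw⟩ := card_pos.mp (show 0 < #(G.neighborFinset x ∩ G.neighborFinset a) by omega)
    simp only [mem_inter, mem_neighborFinset] at hw
    exact hclosed x w hx hw.2 hw.1 (hx₀ ▸ hyx₀.symm)
  · have hxx₀ : x₀ ∈ G.neighborFinset x ∩ G.neighborFinset a := by
      rw [heq]; simpa [hx₀] using hax₀
    simp only [mem_inter, mem_neighborFinset] at hxx₀
    exact hclosed x₀ x hax₀ hx hxx₀.1.symm hyx₀.symm

end TnStarFree

-- `(n - 2) m - 2 e(H)` is at least `deficit n m` for every connected `T_n^*`-free graph `H`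
-- of order `m`.
def deficit (n m : ℕ) : ℕ :=
  if m ≤ n - 1 then m * (n - 1 - m) else if m = 2 * n - 5 then 3 * (n - 4) else m

theorem deficit_of_le_of_ne {n m : ℕ} (hm : n ≤ m) (hm' : m ≠ 2 * n - 5) : deficit n m = m := by
  rw [deficit, if_neg (by omega), if_neg hm']

section DeficitArith

variable {n m S : ℕ}

theorem add_deficit_le_of_le_card (hn : 6 ≤ n) (hm : n ≤ m) (h₁ : S ≤ (n - 3) * m)
    (h₂ : m = 2 * n - 5 → S + 3 * (n - 4) ≤ (n - 2) * m) : S + deficit n m ≤ (n - 2) * m := by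
  rw [deficit, if_neg (by omega)]
  split_ifs with h
  · exact h₂ h
  · calc S + m ≤ (n - 3) * m + 1 * m := by omega
      _ = (n - 2) * m := by rw [← add_mul]; congr 1; omega

theorem add_deficit_le_of_le_three_mul (hn : 6 ≤ n) (hm : n ≤ m) (hS : S ≤ 3 * (m - 1)) :
    S + deficit n m ≤ (n - 2) * m := by
  apply add_deficit_le_of_le_card hn hm
  · exact (show S ≤ 3 * m by omega).trans (Nat.mul_le_mul_right _ (by omega))
  · rintro rfl
    obtain ⟨j, rfl⟩ := Nat.exists_eq_add_of_le hn
    have : S ≤ 6 * j + 18 := by omega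
    rw [show 2 * (6 + j) - 5 = 2 * j + 7 by omega, show 6 + j - 2 = j + 4 by omega,
      show 6 + j - 4 = j + 2 by omega]
    nlinarith

theorem add_deficit_le_of_le_mul_add (hn : 6 ≤ n) (hm : n ≤ m)
    (hS : S ≤ (n - 4) * (n - 2) + 2 * (m - 1)) : S + deficit n m ≤ (n - 2) * m := by
  obtain ⟨j, rfl⟩ := Nat.exists_eq_add_of_le hn
  obtain ⟨t, rfl⟩ := Nat.exists_eq_add_of_le hm
  rw [show 6 + j - 4 = j + 2 by omega, show 6 + j - 2 = j + 4 by omega,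
    show 6 + j + t - 1 = 5 + j + t by omega] at hS
  apply add_deficit_le_of_le_card hn hm
  · rw [show 6 + j - 3 = j + 3 by omega]
    nlinarith
  · intro ht
    obtain rfl : t = j + 1 := by omega
    rw [show 6 + j - 2 = j + 4 by omega, show 6 + j - 4 = j + 2 by omega]
    nlinarith

theorem add_deficit_le_of_le_mul (hn : 6 ≤ n) (hm : n ≤ m) (hS : S ≤ (n - 3) * m)
    (hS' : m = 2 * n - 5 → S ≤ 2 * ((n - 3) * (n - 3)) ∨ S ≤ (n - 4) * m) :
    S + deficit n m ≤ (n - 2) * m := by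
  apply add_deficit_le_of_le_card hn hm hS
  rintro rfl
  obtain ⟨j, rfl⟩ := Nat.exists_eq_add_of_le hn
  rw [show 2 * (6 + j) - 5 = 2 * j + 7 by omega, show 6 + j - 2 = j + 4 by omega,
    show 6 + j - 4 = j + 2 by omega]
  rw [show 2 * (6 + j) - 5 = 2 * j + 7 by omega, show 6 + j - 3 = j + 3 by omega,
    show 6 + j - 4 = j + 2 by omega] at hS'
  rcases hS' rfl with h | h <;> nlinarith

end DeficitArith

section Connected

variable {V : Type*} [Fintype V] {G : SimpleGraph V} [DecidableRel G.Adj] {n : ℕ}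

theorem sum_degree_add_deficit_le_of_card_le (hm : Fintype.card V ≤ n - 1) :
    ∑ v, G.degree v + deficit n (Fintype.card V) ≤ (n - 2) * Fintype.card V := by
  rw [deficit, if_pos hm]
  have hsum := G.sum_degree_le_mul_card fun v => Nat.le_sub_one_of_lt (G.degree_lt_card_verts v)
  generalize Fintype.card V = m at *
  rcases Nat.eq_zero_or_pos m with rfl | hm0
  · simpa using hsum
  calc ∑ v, G.degree v + m * (n - 1 - m) ≤ m * ((m - 1) + (n - 1 - m)) := by
        rw [Nat.mul_add, mul_comm m (m - 1)]; omega
    _ = (n - 2) * m := by rw [mul_comm]; congr 1; omega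

variable [DecidableEq V]

theorem sum_compl_degree_le (hn : 4 ≤ n) (hfree : ¬ ContainsCopy G (TnStar n))
    (hconn : G.Connected) {a : V} (hdeg : n - 2 ≤ G.degree a) :
    ∑ y ∈ (G.neighborFinset a)ᶜ, G.degree y ≤ Fintype.card V - 1 := by
  have ha : a ∈ (G.neighborFinset a)ᶜ := by simp
  rw [← add_sum_erase _ _ ha]
  have hle : ∑ y ∈ (G.neighborFinset a)ᶜ.erase a, G.degree y ≤
      #((G.neighborFinset a)ᶜ.erase a) := by
    simpa using sum_le_card_nsmul ((G.neighborFinset a)ᶜ.erase a) (fun y => G.degree y) 1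
      fun y hy => by
        obtain ⟨hya, hy⟩ := mem_erase.mp hy
        have hay : ¬ G.Adj a y := by simpa using hy
        exact degree_le_one_of_not_adj hn hfree hdeg hya hay
          (neighborFinset_subset_of_not_adj hn hfree hconn (by omega) hay)
  rw [card_erase_of_mem ha, card_compl, card_neighborFinset_eq_degree] at hle
  have := G.degree_lt_card_verts a
  omega

theorem sum_degree_le_of_le_degree (hn : 4 ≤ n) (hfree : ¬ ContainsCopy G (TnStar n))
    (hconn : G.Connected) {a : V} (hdeg : n - 1 ≤ G.degree a) :
    ∑ v, G.degree v ≤ 3 * (Fintype.card V - 1) := by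
  have hsum := sum_degree_le_of_card_inter_le (G.neighborFinset a)
    (fun y hy => neighborFinset_subset_of_not_adj hn hfree hconn (by omega) (by simpa using hy))
    (k := 1) fun x hx => card_neighborFinset_inter_le_one hn hfree hdeg (by simpa using hx)
  have hcompl := sum_compl_degree_le hn hfree hconn (a := a) (by omega)
  have hlt := G.degree_lt_card_verts a
  rw [card_neighborFinset_eq_degree] at hsum
  omega

theorem sum_degree_le_of_degree_eq (hn : 4 ≤ n) (hfree : ¬ ContainsCopy G (TnStar n))
    (hconn : G.Connected) (hm : n ≤ Fintype.card V) {a : V} (hdeg : G.degree a = n - 2) :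
    ∑ v, G.degree v ≤ (n - 4) * (n - 2) + 2 * (Fintype.card V - 1) := by
  obtain ⟨y, -, hy⟩ := exists_mem_notMem_of_card_lt_card (s := insert a (G.neighborFinset a))
    (t := univ) (by
      rw [card_univ]
      exact (card_insert_le _ _).trans_lt (by rw [card_neighborFinset_eq_degree]; omega))
  rw [mem_insert, not_or, mem_neighborFinset] at hy
  have hsum := sum_degree_le_of_card_inter_le (G.neighborFinset a)
    (fun y hy => neighborFinset_subset_of_not_adj hn hfree hconn (by omega) (by simpa using hy))
    (k := n - 4) fun x hx =>
      card_neighborFinset_inter_le hn hfree hconn hdeg hy.1 hy.2 (by simpa using hx)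
  have hcompl := sum_compl_degree_le hn hfree hconn (a := a) (by omega)
  rw [card_neighborFinset_eq_degree, hdeg] at hsum
  omega

theorem sum_degree_le_of_degree_eq_maxDegree (hn : 4 ≤ n) (hfree : ¬ ContainsCopy G (TnStar n))
    (hconn : G.Connected) {v : V} (hdeg : G.degree v = n - 3) (hmax : G.maxDegree ≤ n - 3) :
    ∑ v, G.degree v ≤ 2 * ((n - 3) * (n - 3)) := by
  have hsum := sum_degree_le_two_mul_sum (G.neighborFinset v) fun y hy =>
    neighborFinset_subset_of_not_adj hn hfree hconn hdeg.ge (by simpa using hy)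
  have hB : ∑ x ∈ G.neighborFinset v, G.degree x ≤ (n - 3) * (n - 3) := by
    simpa [hdeg, mul_comm] using sum_le_card_nsmul (G.neighborFinset v) (fun x => G.degree x)
      (n - 3) fun x _ => (G.degree_le_maxDegree x).trans hmax
  omega

theorem sum_degree_add_deficit_le (hn : 6 ≤ n) (hfree : ¬ ContainsCopy G (TnStar n))
    (hconn : G.Connected) :
    ∑ v, G.degree v + deficit n (Fintype.card V) ≤ (n - 2) * Fintype.card V := by
  by_cases hm : Fintype.card V ≤ n - 1
  · exact sum_degree_add_deficit_le_of_card_le hm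
  have := hconn.nonempty
  obtain ⟨a, ha⟩ := G.exists_maximal_degree_vertex
  rcases le_or_gt (n - 1) (G.degree a) with hdeg | hdeg
  · exact add_deficit_le_of_le_three_mul hn (by omega)
      (sum_degree_le_of_le_degree (by omega) hfree hconn hdeg)
  rcases eq_or_lt_of_le (show G.degree a ≤ n - 2 by omega) with hdeg | hdeg
  · exact add_deficit_le_of_le_mul_add hn (by omega)
      (sum_degree_le_of_degree_eq (by omega) hfree hconn (by omega) hdeg)
  have hmax : ∀ v, G.degree v ≤ n - 3 := fun v => (G.degree_le_maxDegree v).trans (by omega)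
  refine add_deficit_le_of_le_mul hn (by omega) (G.sum_degree_le_mul_card hmax) fun _ => ?_
  by_cases hv : ∃ v, G.degree v = n - 3
  · obtain ⟨v, hv⟩ := hv
    exact Or.inl (sum_degree_le_of_degree_eq_maxDegree (by omega) hfree hconn hv (by omega))
  · push Not at hv
    exact Or.inr (G.sum_degree_le_mul_card fun v => by have := hmax v; have := hv v; omega)

end Connected

section Components

variable {V : Type*} [Fintype V] [DecidableEq V] {G : SimpleGraph V} [DecidableRel G.Adj]
  {n : ℕ}

theorem sum_eq_sum_connectedComponent (f : V → ℕ) :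
    ∑ v, f v = ∑ C : G.ConnectedComponent, ∑ v : C.supp, f v := by
  classical
  rw [← sum_fiberwise univ G.connectedComponentMk f]
  exact sum_congr rfl fun C _ =>
    sum_subtype _ (fun v => by simp [ConnectedComponent.mem_supp_iff]) f

theorem card_eq_sum_card_supp :
    Fintype.card V = ∑ C : G.ConnectedComponent, Fintype.card C.supp := by
  rw [Fintype.card_eq_sum_ones, sum_eq_sum_connectedComponent (G := G)]
  simp

theorem sum_degree_add_sum_deficit_le (hn : 6 ≤ n) (hfree : ¬ ContainsCopy G (TnStar n)) :
    ∑ v, G.degree v + ∑ C : G.ConnectedComponent, deficit n (Fintype.card C.supp) ≤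
      (n - 2) * Fintype.card V := by
  have hC : ∀ C : G.ConnectedComponent, ∑ v : C.supp, G.degree v + deficit n (Fintype.card C.supp)
      ≤ (n - 2) * Fintype.card C.supp := fun C => by
    have := sum_degree_add_deficit_le hn (fun h => hfree h.of_induce) C.connected_toSimpleGraph
    rwa [sum_congr rfl fun v _ => degree_induce_of_neighborSet_subset (G := G) (s := C.supp)
      fun w hw => (C.mem_supp_congr_adj hw).mp v.2] at this
  calc ∑ v, G.degree v + ∑ C : G.ConnectedComponent, deficit n (Fintype.card C.supp)
      = ∑ C : G.ConnectedComponent,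
          (∑ v : C.supp, G.degree v + deficit n (Fintype.card C.supp)) := by
        rw [sum_eq_sum_connectedComponent (G := G), sum_add_distrib]
    _ ≤ ∑ C : G.ConnectedComponent, (n - 2) * Fintype.card C.supp := sum_le_sum fun C _ => hC C
    _ = (n - 2) * Fintype.card V := by
        rw [← mul_sum, card_eq_sum_card_supp (G := G)]

end Components

section Residues

-- For `d ≥ 5` this agrees with `deficit (d + 1) x` when `x ≤ d` or `x = 2 d - 3`.
def modDefect (d x : ℕ) : ℕ := x % d * (d - x % d)

theorem modDefect_add_le (d x y : ℕ) : modDefect d (x + y) ≤ modDefect d x + modDefect d y := by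
  rcases Nat.eq_zero_or_pos d with rfl | hd
  · simp [modDefect]
  have hx := Nat.mod_lt x hd
  have hy := Nat.mod_lt y hd
  unfold modDefect
  rw [Nat.add_mod]
  generalize x % d = a at *
  generalize y % d = b at *
  rcases lt_or_ge (a + b) d with h | h
  · rw [Nat.mod_eq_of_lt h]
    zify [hx.le, hy.le, h.le]
    nlinarith
  · rw [Nat.mod_eq_sub_mod h, Nat.mod_eq_of_lt (by omega)]
    zify [h, hx.le, hy.le, show a + b - d ≤ d by omega]
    nlinarith

theorem mul_sub_le_mul_sub {d j y : ℕ} (hj : j ≤ y) (hy : y + j ≤ d) :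
    j * (d - j) ≤ y * (d - y) := by
  zify [hj, hy, show j ≤ d by omega, show y ≤ d by omega]
  nlinarith

variable {n : ℕ}

theorem modDefect_le_deficit (hn : 6 ≤ n) {m : ℕ} (hm : m ≤ n - 1 ∨ m = 2 * n - 5) :
    modDefect (n - 1) m ≤ deficit n m := by
  unfold modDefect deficit
  rcases hm with hm | rfl
  · rw [if_pos hm]
    rcases lt_or_eq_of_le hm with hm | rfl
    · rw [Nat.mod_eq_of_lt hm]
    · simp
  · rw [if_neg (by omega), if_pos rfl, show 2 * n - 5 = (n - 4) + (n - 1) by omega,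
      Nat.add_mod_right, Nat.mod_eq_of_lt (by omega), show n - 1 - (n - 4) = 3 by omega, mul_comm]

theorem sum_eq_zero_or_of_forall_le_and_ne {ι : Type*} {s : Finset ι} {c : ι → ℕ}
    (hs : ∀ i ∈ s, n ≤ c i ∧ c i ≠ 2 * n - 5) :
    ∑ i ∈ s, c i = 0 ∨ n ≤ ∑ i ∈ s, c i ∧ ∑ i ∈ s, c i ≠ 2 * n - 5 := by
  rcases s.eq_empty_or_nonempty with rfl | ⟨i, hi⟩
  · simp
  refine Or.inr ⟨(hs i hi).1.trans (single_le_sum (fun _ _ => Nat.zero_le _) hi), fun heq => ?_⟩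
  by_cases hj : ∃ j ∈ s, j ≠ i
  · obtain ⟨j, hj, hji⟩ := hj
    have := add_le_sum (f := c) (fun _ _ => Nat.zero_le _) hi hj (Ne.symm hji)
    have := hs i hi
    have := hs j hj
    omega
  · push Not at hj
    rw [eq_singleton_iff_unique_mem.mpr ⟨hi, hj⟩, sum_singleton] at heq
    exact (hs i hi).2 heq

theorem mul_sub_eq_of_admissible {d r : ℕ}
    (hr : r = 0 ∨ r + 3 = d ∨ r + 2 = d ∨ r + 1 = d) :
    r * (d - r) = 0 ∨ r + 3 = d ∧ r * (d - r) = 3 * (d - 3) ∨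
      r + 2 = d ∧ r * (d - r) = 2 * (d - 2) ∨ r + 1 = d ∧ r * (d - r) = d - 1 := by
  rcases hr with rfl | rfl | rfl | rfl
  · simp
  · simp [mul_comm]
  · simp [mul_comm]
  · simp

theorem mul_sub_le_add_modDefect (hn : 6 ≤ n) {r x s : ℕ}
    (hr : r = 0 ∨ r = n - 4 ∨ r = n - 3 ∨ r = n - 2) (hmod : (x + s) % (n - 1) = r)
    (hs : s = 0 ∨ n ≤ s ∧ s ≠ 2 * n - 5) : r * (n - 1 - r) ≤ s + modDefect (n - 1) x := by
  obtain ⟨d, rfl⟩ : ∃ d, n = d + 1 := ⟨n - 1, by omega⟩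
  rw [Nat.add_sub_cancel] at hmod ⊢
  rcases hs with rfl | ⟨hs₁, hs₂⟩
  · simp [modDefect, ← hmod]
  have hR := mul_sub_eq_of_admissible (r := r) (d := d) (by omega)
  unfold modDefect
  have hy := Nat.mod_lt x (show 0 < d by omega)
  rw [← Nat.mod_add_mod] at hmod
  have hq := Nat.div_add_mod (x % d + s) d
  rw [hmod] at hq
  generalize (x % d + s) / d = q at hq
  generalize x % d = y at *
  have hF₁ : y = 0 ∨ d - 1 ≤ y * (d - y) := by
    rcases Nat.eq_zero_or_pos y with h | h
    · exact Or.inl h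
    · exact Or.inr (by simpa using mul_sub_le_mul_sub (j := 1) h (by omega))
  have hF₂ : y ≤ 1 ∨ d - 1 ≤ y ∨ 2 * (d - 2) ≤ y * (d - y) := by
    by_cases h : 2 ≤ y ∧ y + 2 ≤ d
    · exact Or.inr (Or.inr (mul_sub_le_mul_sub h.1 h.2))
    · omega
  generalize r * (d - r) = R at *
  generalize y * (d - y) = F at *
  -- `R ≤ 3 (d - 3)`, so only `s < 3 (d - 3)` matters, and then `y + s < 4 d`.
  by_cases hbig : 3 * (d - 3) ≤ s
  · omega
  have : q < 4 := Nat.lt_of_mul_lt_mul_left (a := d) (by omega)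
  interval_cases q <;> omega

theorem mul_sub_le_sum_deficit (hn : 6 ≤ n) {r : ℕ} (hr : r = 0 ∨ r = n - 4 ∨ r = n - 3 ∨ r = n - 2)
    {ι : Type*} (s : Finset ι) (c : ι → ℕ) (hmod : (∑ i ∈ s, c i) % (n - 1) = r) :
    r * (n - 1 - r) ≤ ∑ i ∈ s, deficit n (c i) := by
  classical
  let large i := n ≤ c i ∧ c i ≠ 2 * n - 5
  rw [← sum_filter_not_add_sum_filter s large] at hmod ⊢
  have hlarge : ∑ i ∈ s with large i, deficit n (c i) = ∑ i ∈ s with large i, c i :=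
    sum_congr rfl fun i hi => deficit_of_le_of_ne (mem_filter.mp hi).2.1 (mem_filter.mp hi).2.2
  have hsmall : modDefect (n - 1) (∑ i ∈ s with ¬ large i, c i) ≤
      ∑ i ∈ s with ¬ large i, deficit n (c i) :=
    (le_sum_of_subadditive _ (by simp [modDefect]) (modDefect_add_le _) _ _).trans
      (sum_le_sum fun i hi => modDefect_le_deficit hn (by have := (mem_filter.mp hi).2; omega))
  have := mul_sub_le_add_modDefect hn hr hmod
    (sum_eq_zero_or_of_forall_le_and_ne fun i hi => (mem_filter.mp hi).2)
  omega

end Residues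

section Blocks

def blockGraph (d p : ℕ) : SimpleGraph (Fin p) where
  Adj x y := x ≠ y ∧ (x : ℕ) / d = (y : ℕ) / d

variable {n d p : ℕ}

theorem blockGraph_adj {x y : Fin p} :
    (blockGraph d p).Adj x y ↔ x ≠ y ∧ (x : ℕ) / d = (y : ℕ) / d := Iff.rfl

instance : DecidableRel (blockGraph d p).Adj := fun _ _ => decidable_of_iff' _ blockGraph_adj

theorem not_containsCopy_blockGraph (hn : 4 ≤ n) :
    ¬ ContainsCopy (blockGraph (n - 1) p) (TnStar n) := by
  rintro ⟨f, hf⟩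
  have hstep : ∀ (i j : ℕ) (hi : i < n) (hj : j < n), i ≠ j →
      ((i = 0 ∧ 1 ≤ j ∧ j ≤ n - 3) ∨ (i = n - 3 ∧ j = n - 2) ∨ (i = n - 2 ∧ j = n - 1)) →
      (f ⟨i, hi⟩ : ℕ) / (n - 1) = (f ⟨j, hj⟩ : ℕ) / (n - 1) :=
    fun i j hi hj hij h =>
      (blockGraph_adj.mp (hf ⟨i, hi⟩ ⟨j, hj⟩ ⟨by simpa using hij, Or.inl h⟩)).2
  -- `T_n^*` is connected, so its image lies in a single block, which has only `n - 1` vertices.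
  have hblock : ∀ i : Fin n, (f i : ℕ) / (n - 1) = (f ⟨0, by omega⟩ : ℕ) / (n - 1) := by
    have h₃ := hstep 0 (n - 3) (by omega) (by omega) (by omega) (by omega)
    have h₂ := hstep (n - 3) (n - 2) (by omega) (by omega) (by omega) (by omega)
    rintro ⟨i, hi⟩
    rcases Nat.eq_zero_or_pos i with rfl | hi₀
    · rfl
    rcases le_or_gt i (n - 3) with hi₃ | hi₃
    · exact (hstep 0 i (by omega) hi (by omega) (by omega)).symm
    rcases eq_or_ne i (n - 2) with rfl | hi₂
    · rw [← h₂, h₃]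
    obtain rfl : i = n - 1 := by omega
    rw [← hstep (n - 2) (n - 1) (by omega) hi (by omega) (by omega), ← h₂, h₃]
  have hinj : Function.Injective fun i => (⟨(f i : ℕ) % (n - 1), Nat.mod_lt _ (by omega)⟩ :
      Fin (n - 1)) := by
    intro i j hij
    apply f.injective
    apply Fin.ext
    rw [← Nat.div_add_mod (f i : ℕ) (n - 1), ← Nat.div_add_mod (f j : ℕ) (n - 1), hblock i,
      hblock j, Fin.mk.inj hij]
  have := Fintype.card_le_of_injective _ hinj
  simp only [Fintype.card_fin] at this
  omega

theorem card_filter_div_eq (hd : 0 < d) (c : ℕ) :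
    #{y : Fin p | (y : ℕ) / d = c} = min p ((c + 1) * d) - min p (c * d) := by
  have hsub : ({y : Fin p | (y : ℕ) < c * d} : Finset (Fin p)) ⊆
      ({y : Fin p | (y : ℕ) < (c + 1) * d} : Finset (Fin p)) :=
    fun y hy => by simp only [mem_filter, mem_univ, true_and] at hy ⊢; nlinarith
  rw [← Fin.card_filter_val_lt, ← Fin.card_filter_val_lt, ← card_sdiff_of_subset hsub]
  congr 1
  ext y
  simp only [mem_filter, mem_univ, true_and, mem_sdiff, not_lt, Nat.div_eq_iff hd, add_one_mul]
  omega

theorem degree_blockGraph (x : Fin p) :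
    (blockGraph d p).degree x = #{y : Fin p | (y : ℕ) / d = (x : ℕ) / d} - 1 := by
  rw [← card_neighborFinset_eq_degree, ← card_erase_of_mem (s := {y : Fin p | _}) (a := x)
    (by simp)]
  congr 1
  ext y
  simp [blockGraph_adj, eq_comm]

theorem sum_degree_blockGraph_add {k r : ℕ} (hr : r < d) :
    ∑ x, (blockGraph d (k * d + r)).degree x + r * (d - r) = (d - 1) * (k * d + r) := by
  have hd : 0 < d := by omega
  have hdeg : ∀ x : Fin (k * d + r), (blockGraph d (k * d + r)).degree x =
      if (x : ℕ) < k * d then d - 1 else r - 1 := fun x => by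
    rw [degree_blockGraph, card_filter_div_eq hd]
    split_ifs with hx
    · have hc : (x : ℕ) / d + 1 ≤ k := (Nat.div_lt_iff_lt_mul hd).mpr hx
      have := Nat.mul_le_mul_right d hc
      rw [min_eq_right (by omega), min_eq_right (by nlinarith), add_one_mul]
      omega
    · have hc : (x : ℕ) / d = k := (Nat.div_eq_iff hd).mpr ⟨by omega, by omega⟩
      rw [hc, min_eq_left (by rw [add_one_mul]; omega), min_eq_right (by omega)]
      omega
  have hcard := card_filter_add_card_filter_not (s := univ)
    (fun x : Fin (k * d + r) => (x : ℕ) < k * d)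
  rw [Fin.card_filter_val_lt, card_univ, Fintype.card_fin, min_eq_right (by omega)] at hcard
  rw [sum_congr rfl fun x _ => hdeg x, sum_ite, sum_const, sum_const, Fin.card_filter_val_lt,
    min_eq_right (by omega), smul_eq_mul, smul_eq_mul,
    show #{x : Fin (k * d + r) | ¬ (x : ℕ) < k * d} = r by omega]
  obtain ⟨t, rfl⟩ : ∃ t, d = r + 1 + t := ⟨d - r - 1, by omega⟩
  rcases r with _ | r
  · simp [mul_comm]
  · simp only [Nat.add_sub_cancel, show r + 1 + 1 + t - 1 = r + 1 + t by omega,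
      show r + 1 + 1 + t - (r + 1) = t + 1 by omega]
    ring

end Blocks

theorem two_mul_card_edgeSet_add_le {V : Type*} [Fintype V] [DecidableEq V] {G : SimpleGraph V}
    {n r : ℕ} (hn : 6 ≤ n) (hr : r = 0 ∨ r = n - 4 ∨ r = n - 3 ∨ r = n - 2)
    (hmod : Fintype.card V % (n - 1) = r) (hfree : ¬ ContainsCopy G (TnStar n)) :
    2 * Nat.card G.edgeSet + r * (n - 1 - r) ≤ (n - 2) * Fintype.card V := by
  classical
  have hsum := sum_degree_add_sum_deficit_le hn hfree
  have hdef := mul_sub_le_sum_deficit hn hr univ (fun C : G.ConnectedComponent =>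
    Fintype.card C.supp) (by rwa [← card_eq_sum_card_supp])
  rw [sum_degrees_eq_twice_card_edges, edgeFinset_card] at hsum
  rw [Nat.card_eq_fintype_card]
  omega

theorem two_mul_card_edgeSet_blockGraph {d k r : ℕ} (hr : r < d) :
    2 * Nat.card (blockGraph d (k * d + r)).edgeSet + r * (d - r) = (d - 1) * (k * d + r) := by
  rw [Nat.card_eq_fintype_card, ← edgeFinset_card, ← sum_degrees_eq_twice_card_edges]
  exact sum_degree_blockGraph_add hr

theorem stmt9_general (p n k r : ℕ) (hn : 6 ≤ n)
    (hr : r ≤ n - 2) (hpkr : p = k * (n - 1) + r)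
    (hrs : r = 0 ∨ r = n - 4 ∨ r = n - 3 ∨ r = n - 2) :
    exNum p (TnStar n) = ((n - 2) * p - r * (n - 1 - r)) / 2 := by
  have hmod : Fintype.card (Fin p) % (n - 1) = r := by
    rw [Fintype.card_fin, hpkr, add_comm, Nat.add_mul_mod_self_right, Nat.mod_eq_of_lt (by omega)]
  have hlower := two_mul_card_edgeSet_blockGraph (k := k) (show r < n - 1 by omega)
  rw [← hpkr, show n - 1 - 1 = n - 2 by omega] at hlower
  have hgreatest : IsGreatest {m | ∃ G : SimpleGraph (Fin p), ¬ ContainsCopy G (TnStar n) ∧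
      Nat.card G.edgeSet = m} (Nat.card (blockGraph (n - 1) p).edgeSet) := by
    refine ⟨⟨blockGraph (n - 1) p, not_containsCopy_blockGraph (by omega), rfl⟩, ?_⟩
    rintro m ⟨G, hG, rfl⟩
    have := two_mul_card_edgeSet_add_le hn hrs hmod hG
    rw [Fintype.card_fin] at this
    omega
  rw [exNum, hgreatest.csSup_eq]
  omega

theorem stmt9 (p n k r : ℕ) (hn : 6 ≤ n) (hp : n - 1 ≤ p) (hk : 1 ≤ k)
    (hr : r ≤ n - 2) (hpkr : p = k * (n - 1) + r)
    (hrs : r = 0 ∨ r = n - 4 ∨ r = n - 3 ∨ r = n - 2) :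
    exNum p (TnStar n) = ((n - 2) * p - r * (n - 1 - r)) / 2 :=
  stmt9_general p n k r hn hr hpkr hrs
end
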